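/- arXiv:1604.03269 — 6 statements merged into one kernel-verified Lean document; each statement's English description precedes it below -/
import Mathlib

section
/- Let V be a finite set with |V| = d, let 2 ≤ k ≤ d − 1, and let T be a k-order cherry tree on V. If T is a truncated R-vine at level k (i.e., T is the top tree of some cherry-vine sequence T_2, …, T_k on V), then the separators of T form a (k − 1)-order cherry tree. -/
/-- A junction tree on a vertex set `V`: a finite tree `G` with nodes labeled by
clusters (finite subsets of `V`), such that no cluster is contained in the cluster
of another node and the running intersection property holds.  (The covering
condition "the clusters cover `V`" is stated separately as `JTree.CoversAll`,
so that junction trees on subsets of `V`, such as the tree formed by the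
separators, can be treated uniformly.) -/
structure JTree (V : Type) [DecidableEq V] where
  ι : Type
  [fin : Fintype ι]
  [deq : DecidableEq ι]
  G : SimpleGraph ι
  isTree : G.IsTree
  C : ι → Finset V
  noSub : ∀ i j : ι, i ≠ j → ¬ C i ⊆ C j
  rip : ∀ (i j : ι) (p : G.Walk i j), p.IsPath → ∀ x ∈ p.support, C i ∩ C j ⊆ C x

attribute [instance] JTree.fin JTree.deq

namespace JTree

variable {V : Type} [DecidableEq V]

/-- The clusters cover all of `V`: the junction tree is a junction tree "on `V`". -/
def CoversAll (T : JTree V) : Prop := ∀ v : V, ∃ i, v ∈ T.C i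

/-- `T` is a `k`-order cherry tree: every cluster has exactly `k` elements and
every edge-separator has exactly `k - 1` elements. -/
def IsCherry (T : JTree V) (k : ℕ) : Prop :=
  (∀ i, (T.C i).card = k) ∧ ∀ i j, T.G.Adj i j → (T.C i ∩ T.C j).card = k - 1

/-- The set of (distinct) separators of `T`. -/
def separators (T : JTree V) : Set (Finset V) :=
  { s | ∃ i j, T.G.Adj i j ∧ s = T.C i ∩ T.C j }

/-- The separators of `T` form a `(k-1)`-order cherry tree: there is a junction
tree whose set of clusters is exactly the set of distinct separators of `T`, in
which every cluster has `k - 1` elements and every edge-separator has `k - 2`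
elements. -/
def SeparatorsFormCherry (T : JTree V) (k : ℕ) : Prop :=
  ∃ T' : JTree V, T'.IsCherry (k - 1) ∧ Set.range T'.C = T.separators

/-- Every cluster of `T'` is the union of two clusters that are adjacent in `T`. -/
def Succ (T T' : JTree V) : Prop :=
  ∀ i' : T'.ι, ∃ i j : T.ι, T.G.Adj i j ∧ T'.C i' = T.C i ∪ T.C j

/-- `T` is a truncated R-vine at level `k`: there exists a cherry-vine sequence
`T₂, …, T_k` on `V` (with `T_m` an `m`-order cherry tree on `V` and each cluster of
`T_{m+1}` the union of two adjacent clusters of `T_m`) whose top tree `T_k` is `T`. -/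
def IsTruncatedRVine (T : JTree V) (k : ℕ) : Prop :=
  ∃ Ts : ℕ → JTree V,
    (∀ m, 2 ≤ m → m ≤ k → (Ts m).CoversAll ∧ (Ts m).IsCherry m) ∧
    (∀ m, 2 ≤ m → m < k → Succ (Ts m) (Ts (m + 1))) ∧
    Ts k = T

/-- The separator attached to an edge of the tree, as a function on `Sym2`. -/
noncomputable def sep (T : JTree V) : Sym2 T.ι → Finset V :=
  Sym2.lift ⟨fun i j => T.C i ∩ T.C j, fun _ _ => Finset.inter_comm _ _⟩

/-- The (finite) set of edges of the tree underlying `T`. -/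
noncomputable def edgeFinset (T : JTree V) : Finset (Sym2 T.ι) :=
  Set.Finite.toFinset (Set.toFinite T.G.edgeSet)

end JTree

/-!
Let `U = T_{k-1}` be the level below `T`, so every cluster of `T` is `C_A ∪ C_B` for an edge
`A – B` of `U`. If `u – w` is an edge of `T`, with `C_u = C_A ∪ C_B` and `C_w = C_A' ∪ C_B'`,
the two `U`-edges share a node `P`: otherwise the running intersection property squeezes the
`(k-1)`-element separator `C_u ∩ C_w` into the intersection of two distinct clusters of `U`,
which has at most `k - 2` elements. Counting then gives `C_u ∩ C_w = C_P`. So every separator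
of `T` is a cluster of `U`, and walking along `T` shows that the nodes of `U` carrying
separators span a subtree; restricted to it, `U` is the required `(k-1)`-order cherry tree.
For `k = 2` the separators are distinct singletons, and any tree on them works.
-/

namespace SimpleGraph

variable {α β : Type*}

namespace IsTree

variable {G : SimpleGraph α} (hG : G.IsTree)

noncomputable def path (a b : α) : G.Walk a b :=
  (hG.existsUnique_path a b).exists.choose

lemma isPath_path (a b : α) : (hG.path a b).IsPath :=
  (hG.existsUnique_path a b).exists.choose_spec

lemma eq_path {a b : α} {p : G.Walk a b} (hp : p.IsPath) : p = hG.path a b :=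
  (hG.existsUnique_path a b).unique hp (hG.isPath_path a b)

lemma mem_support_path_or_mem_support_path {A B : α} (hAB : G.Adj A B) (X : α) :
    B ∈ (hG.path A X).support ∨ A ∈ (hG.path B X).support := by
  by_cases hB : B ∈ (hG.path A X).support
  · exact Or.inl hB
  · right
    rw [← hG.eq_path ((hG.isPath_path A X).cons (h := hAB.symm) hB), Walk.support_cons]
    exact List.mem_cons_of_mem _ (Walk.start_mem_support _)

lemma mem_support_path_of_adj {A A' B' P : α} (hA'B' : G.Adj A' B')
    (hP : P ∈ (hG.path A A').support) (hPA' : P ≠ A') : P ∈ (hG.path A B').support := by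
  classical
  by_cases hA' : A' ∈ (hG.path A B').support
  · rw [← hG.eq_path ((hG.isPath_path A B').takeUntil hA')] at hP
    exact Walk.support_takeUntil_subset_support _ hA' hP
  · rw [← hG.eq_path ((hG.isPath_path A B').concat hA' hA'B'.symm), Walk.support_concat] at hP
    simpa [hPA'] using hP

lemma exists_mem_support_path_of_adj_of_adj {A B A' B' : α} (hAB : G.Adj A B)
    (hA'B' : G.Adj A' B') (hA : A ≠ A') (hB : B ≠ A') :
    ∃ P, (P = A ∨ P = B) ∧ ∀ a, (a = A ∨ a = B) → ∀ a', (a' = A' ∨ a' = B') →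
      P ∈ (hG.path a a').support := by
  rcases hG.mem_support_path_or_mem_support_path hAB A' with hBA | hAB'
  · refine ⟨B, Or.inr rfl, ?_⟩
    rintro a (rfl | rfl) a' (rfl | rfl)
    · exact hBA
    · exact hG.mem_support_path_of_adj hA'B' hBA hB
    all_goals exact Walk.start_mem_support _
  · refine ⟨A, Or.inl rfl, ?_⟩
    rintro a (rfl | rfl) a' (rfl | rfl)
    rotate_left 2
    · exact hAB'
    · exact hG.mem_support_path_of_adj hA'B' hAB' hA
    all_goals exact Walk.start_mem_support _

end IsTree

lemma induce_reachable_of_walk {H : SimpleGraph α} {G : SimpleGraph β} {S : Set β}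
    (f g : α → β) (hfg : ∀ a, G.Adj (f a) (g a))
    (hS : ∀ a b, H.Adj a b → ∃ P ∈ S, (P = f a ∨ P = g a) ∧ (P = f b ∨ P = g b))
    {a b : α} (W : H.Walk a b) {P Q : β} (hP : P ∈ S) (hQ : Q ∈ S)
    (hPa : P = f a ∨ P = g a) (hQb : Q = f b ∨ Q = g b) :
    (G.induce S).Reachable ⟨P, hP⟩ ⟨Q, hQ⟩ := by
  have pair : ∀ a {P Q} (hP : P ∈ S) (hQ : Q ∈ S), (P = f a ∨ P = g a) →
      (Q = f a ∨ Q = g a) → (G.induce S).Reachable ⟨P, hP⟩ ⟨Q, hQ⟩ := by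
    rintro a P Q hP hQ (rfl | rfl) (rfl | rfl)
    exacts [.rfl, Adj.reachable (hfg a), Adj.reachable (hfg a).symm, .rfl]
  induction W generalizing P with
  | nil => exact pair _ hP hQ hPa hQb
  | cons hab W ih =>
    obtain ⟨R, hR, hRa, hRb⟩ := hS _ _ hab
    exact (pair _ hP hR hPa hRa).trans (ih hR hRb hQb)

end SimpleGraph

namespace JTree

open SimpleGraph

variable {V : Type} [DecidableEq V]

lemma C_injective (T : JTree V) : Function.Injective T.C :=
  fun i j h => by_contra fun hij => T.noSub i j hij h.le

lemma separators_finite (T : JTree V) : T.separators.Finite :=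
  (Set.finite_range fun p : T.ι × T.ι => T.C p.1 ∩ T.C p.2).subset
    fun _ ⟨i, j, _, hs⟩ => ⟨(i, j), hs.symm⟩

lemma separators_nonempty [Fintype V] (T : JTree V) (hcov : T.CoversAll) (i : T.ι)
    (hi : (T.C i).card < Fintype.card V) : T.separators.Nonempty := by
  obtain ⟨v, -, hv⟩ := Finset.exists_mem_notMem_of_card_lt_card (t := Finset.univ) hi
  obtain ⟨j, hvj⟩ := hcov v
  have : Nontrivial T.ι := nontrivial_of_ne i j fun h => hv (h ▸ hvj)
  obtain ⟨u, hiu⟩ := T.isTree.1.preconnected.exists_adj_of_nontrivial i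
  exact ⟨_, i, u, hiu, rfl⟩

lemma card_inter_le_of_ne {U : JTree V} {m : ℕ} (hU : U.IsCherry m) {P Q : U.ι} (hPQ : P ≠ Q) :
    (U.C P ∩ U.C Q).card ≤ m - 1 := by
  set p := U.isTree.path P Q
  have hsub : U.C P ∩ U.C Q ⊆ U.C P ∩ U.C p.snd :=
    Finset.subset_inter Finset.inter_subset_left
      (U.rip P Q p (U.isTree.isPath_path P Q) _ (p.getVert_mem_support 1))
  exact (Finset.card_le_card hsub).trans_eq (hU.2 _ _ (p.adj_snd (p.not_nil_of_ne hPQ)))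

lemma exists_union_inter_union_subset (U : JTree V) {A B A' B' : U.ι} (hAB : U.G.Adj A B)
    (hA'B' : U.G.Adj A' B') (hA : A ≠ A') (hB : B ≠ A') :
    ∃ P, (P = A ∨ P = B) ∧ (U.C A ∪ U.C B) ∩ (U.C A' ∪ U.C B') ⊆ U.C P := by
  obtain ⟨P, hP, hPpath⟩ := U.isTree.exists_mem_support_path_of_adj_of_adj hAB hA'B' hA hB
  have h a ha a' ha' : U.C a ∩ U.C a' ⊆ U.C P :=
    U.rip a a' _ (U.isTree.isPath_path a a') P (hPpath a ha a' ha')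
  refine ⟨P, hP, ?_⟩
  simp only [Finset.union_inter_distrib_right, Finset.inter_union_distrib_left,
    Finset.union_subset_iff]
  exact ⟨⟨h _ (.inl rfl) _ (.inl rfl), h _ (.inr rfl) _ (.inl rfl)⟩,
    h _ (.inl rfl) _ (.inr rfl), h _ (.inr rfl) _ (.inr rfl)⟩

lemma exists_common_node {U : JTree V} {m : ℕ} (hU : U.IsCherry m) (hm : 0 < m)
    {A B A' B' : U.ι} (hAB : U.G.Adj A B) (hA'B' : U.G.Adj A' B')
    (hcard : m ≤ ((U.C A ∪ U.C B) ∩ (U.C A' ∪ U.C B')).card) :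
    ∃ P, (P = A ∨ P = B) ∧ (P = A' ∨ P = B') := by
  by_contra! h
  obtain ⟨⟨hAA', hAB'⟩, hBA', hBB'⟩ := And.intro (h A (.inl rfl)) (h B (.inr rfl))
  obtain ⟨P, hP, hPsub⟩ := U.exists_union_inter_union_subset hAB hA'B' hAA' hBA'
  obtain ⟨Q, hQ, hQsub⟩ :=
    U.exists_union_inter_union_subset hA'B' hAB (Ne.symm hAA') (Ne.symm hAB')
  have hPQ : P ≠ Q := by
    rintro rfl
    rcases hQ with rfl | rfl
    exacts [(h P hP).1 rfl, (h P hP).2 rfl]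
  have := (Finset.card_le_card (Finset.subset_inter hPsub
    (Finset.inter_comm (U.C A ∪ U.C B) _ ▸ hQsub))).trans (card_inter_le_of_ne hU hPQ)
  omega

lemma exists_eq_inter_of_succ {U T : JTree V} {k : ℕ} (hk : 2 ≤ k) (hU : U.IsCherry (k - 1))
    (hT : T.IsCherry k) (f g : T.ι → U.ι) (hfg : ∀ u, U.G.Adj (f u) (g u))
    (hC : ∀ u, T.C u = U.C (f u) ∪ U.C (g u)) {u w : T.ι} (huw : T.G.Adj u w) :
    ∃ P, (P = f u ∨ P = g u) ∧ (P = f w ∨ P = g w) ∧ T.C u ∩ T.C w = U.C P := by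
  have hsep := hT.2 u w huw
  obtain ⟨P, hPu, hPw⟩ := exists_common_node hU (by omega) (hfg u) (hfg w)
    (by rw [← hC, ← hC, hsep])
  have hsub (v : T.ι) (hPv : P = f v ∨ P = g v) : U.C P ⊆ T.C v := by
    rcases hPv with rfl | rfl <;> simp [hC]
  refine ⟨P, hPu, hPw, (Finset.eq_of_subset_of_card_le (Finset.subset_inter
    (hsub u hPu) (hsub w hPw)) ?_).symm⟩
  rw [hsep, hU.1]

noncomputable def restrict (U : JTree V) (S : Set U.ι) (hS : (U.G.induce S).Connected) :
    JTree V where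
  ι := S
  fin := Fintype.ofFinite S
  G := U.G.induce S
  isTree := ⟨hS, U.isTree.isAcyclic.induce S⟩
  C i := U.C i
  noSub i j hij := U.noSub i j (Subtype.coe_injective.ne hij)
  rip i j p hp x hx := U.rip i j (p.map (Embedding.induce S).toHom)
    (hp.map Subtype.val_injective) x
    ((congrArg (x.1 ∈ ·) (p.support_map _)).mpr (List.mem_map_of_mem hx))

lemma IsCherry.restrict {U : JTree V} {m : ℕ} (hU : U.IsCherry m) (S : Set U.ι)
    (hS : (U.G.induce S).Connected) : (U.restrict S hS).IsCherry m :=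
  ⟨fun i => hU.1 i.val, fun i j hij => hU.2 i.val j.val hij⟩

lemma range_C_restrict (U : JTree V) (S : Set U.ι) (hS : (U.G.induce S).Connected) :
    Set.range (U.restrict S hS).C = U.C '' S := by
  ext; simp [restrict]

theorem separatorsFormCherry_of_succ {U T : JTree V} {k : ℕ} (hk : 2 ≤ k)
    (hU : U.IsCherry (k - 1)) (hT : T.IsCherry k) (hsucc : Succ U T)
    (hne : T.separators.Nonempty) : T.SeparatorsFormCherry k := by
  choose f g hfg hC using hsucc
  have hsep {u w} (huw : T.G.Adj u w) := exists_eq_inter_of_succ hk hU hT f g hfg hC huw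
  set S := {P | U.C P ∈ T.separators}
  have hS : U.C '' S = T.separators := by
    refine subset_antisymm (Set.image_subset_iff.2 fun _ hP => hP) ?_
    rintro s ⟨u, w, huw, rfl⟩
    obtain ⟨P, -, -, hP⟩ := hsep huw
    exact ⟨P, ⟨u, w, huw, hP.symm⟩, hP.symm⟩
  have hSpair : ∀ P ∈ S, ∃ u, P = f u ∨ P = g u := by
    rintro P ⟨u, w, huw, hPuw⟩
    obtain ⟨P', hP'u, -, hP'⟩ := hsep huw
    exact ⟨u, U.C_injective (hPuw.trans hP') ▸ hP'u⟩
  have hconn : (U.G.induce S).Connected := by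
    obtain ⟨-, P₀, hP₀, -⟩ := hS ▸ hne
    have : Nonempty S := ⟨⟨P₀, hP₀⟩⟩
    refine ⟨fun ⟨P, hP⟩ ⟨Q, hQ⟩ => ?_⟩
    obtain ⟨u, hPu⟩ := hSpair P hP
    obtain ⟨w, hQw⟩ := hSpair Q hQ
    refine induce_reachable_of_walk f g hfg (fun u w huw => ?_)
      (T.isTree.1.preconnected u w).some hP hQ hPu hQw
    obtain ⟨R, hRu, hRw, hR⟩ := hsep huw
    exact ⟨R, ⟨u, w, huw, hR.symm⟩, hRu, hRw⟩
  exact ⟨U.restrict S hconn, hU.restrict S hconn, by rw [range_C_restrict, hS]⟩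

noncomputable def ofPairwiseDisjoint {ι : Type} [Finite ι] [Nonempty ι] (C : ι → Finset V)
    (hdisj : Pairwise fun i j => Disjoint (C i) (C j)) (hne : ∀ i, (C i).Nonempty) : JTree V where
  ι := ι
  fin := Fintype.ofFinite ι
  deq := Classical.decEq ι
  G := (connected_top (V := ι)).exists_isTree_le.choose
  isTree := (connected_top (V := ι)).exists_isTree_le.choose_spec.2
  C := C
  noSub i j hij hsub :=
    (hne i).ne_empty ((Finset.disjoint_self_iff_empty _).1 ((hdisj hij).mono_right hsub))
  rip i j p hp x hx := by
    by_cases hij : i = j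
    · subst hij
      obtain rfl : x = i := by
        simpa [Walk.nil_iff_support_eq.1 (Walk.isPath_iff_nil.1 hp)] using hx
      exact Finset.inter_subset_left
    · simp [Finset.disjoint_iff_inter_eq_empty.1 (hdisj hij)]

theorem separatorsFormCherry_two {T : JTree V} (hT : T.IsCherry 2)
    (hne : T.separators.Nonempty) : T.SeparatorsFormCherry 2 := by
  have hcard : ∀ s ∈ T.separators, s.card = 1 := by
    rintro s ⟨i, j, hij, rfl⟩
    exact hT.2 i j hij
  have hdisj : Pairwise fun s t : T.separators => Disjoint s.1 t.1 := by
    rintro ⟨s, hs⟩ ⟨t, ht⟩ hst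
    obtain ⟨a, rfl⟩ := Finset.card_eq_one.1 (hcard s hs)
    obtain ⟨b, rfl⟩ := Finset.card_eq_one.1 (hcard t ht)
    exact Finset.disjoint_singleton.2 fun hab => hst (by subst hab; rfl)
  have : Finite T.separators := T.separators_finite.to_subtype
  have : Nonempty T.separators := hne.to_subtype
  refine ⟨ofPairwiseDisjoint Subtype.val hdisj
    (fun s => Finset.card_pos.1 (by rw [hcard s.1 s.2]; omega)), ⟨fun s => hcard s.1 s.2,
    fun s t hst => ?_⟩, Subtype.range_val⟩
  exact Finset.card_eq_zero.2 (Finset.disjoint_iff_inter_eq_empty.1 (hdisj hst.ne))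

end JTree

/-- If a `k`-order cherry tree `T` on `V` (`2 ≤ k ≤ |V| - 1`) is a
truncated R-vine at level `k`, then its separators form a `(k-1)`-order cherry tree. -/
theorem truncated_rvine_imp_sep_cherry
    {V : Type} [Fintype V] [DecidableEq V] (d k : ℕ)
    (hd : Fintype.card V = d) (hk2 : 2 ≤ k) (hkd : k ≤ d - 1)
    (T : JTree V) (hcov : T.CoversAll) (hch : T.IsCherry k)
    (htr : T.IsTruncatedRVine k) :
    T.SeparatorsFormCherry k := by
  obtain ⟨i⟩ := T.isTree.1.nonempty
  have hsep : T.separators.Nonempty := T.separators_nonempty hcov i (by rw [hch.1 i]; omega)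
  obtain ⟨Ts, hTs, hsucc, rfl⟩ := htr
  obtain rfl | hk3 : k = 2 ∨ 3 ≤ k := by omega
  · exact JTree.separatorsFormCherry_two hch hsep
  · have hsucc' := hsucc (k - 1) (by omega) (by omega)
    rw [Nat.sub_add_cancel (by omega)] at hsucc'
    exact JTree.separatorsFormCherry_of_succ hk2 (hTs (k - 1) (by omega) (by omega)).2 hch hsucc'
      hsep
end

section
/- Let V be a finite set with |V| = d, let 2 ≤ k ≤ d − 1, and let T be a k-order cherry tree on V (so T has at least two clusters). Then the separators of T form a (k − 1)-order cherry tree if and only if every cluster of T is connected to its neighbors by at most two different separators, i.e., for every node i of T the set { C_i ∩ C_j : j adjacent to i in T } has at most two elements. -/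
/-!
Every separator at a node `i` of a `k`-order cherry tree is `Cᵢ` minus one point, so two distinct
separators at `i` already cover `Cᵢ`. If three distinct separators at one node were clusters of a
junction tree, the running intersection property would force two of them to coincide.

Conversely, if every node carries at most two separators, join two separators when they occur at
a common node. By the running intersection property of `T`, all edges of a path in `T` between two
nodes containing a separator `S` are labelled `S`; hence a cycle of separators lifts to a circuit
in `T`, and walks in `T` project to walks of separators, which gives connectedness and the running
intersection property.
-/

open SimpleGraph

theorem Finset.union_eq_of_card_eq_card_sub_one {α : Type*} [DecidableEq α] {s t D : Finset α}
    (hs : s ⊆ D) (ht : t ⊆ D) (hst : s ≠ t) (hsc : s.card = D.card - 1)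
    (htc : t.card = D.card - 1) : s ∪ t = D := by
  have hlt : s.card < (s ∪ t).card := by
    refine Finset.card_lt_card (Finset.ssubset_iff_subset_ne.2 ⟨Finset.subset_union_left, ?_⟩)
    intro h
    exact hst (Finset.eq_of_subset_of_card_le (h ▸ Finset.subset_union_right) (by omega)).symm
  exact Finset.eq_of_subset_of_card_le (Finset.union_subset hs ht)
    (by have := Finset.card_le_card (Finset.union_subset hs ht); omega)

theorem Finset.card_inter_eq_card_sub_two {α : Type*} [DecidableEq α] {s t D : Finset α}
    (hs : s ⊆ D) (ht : t ⊆ D) (hst : s ≠ t) (hsc : s.card = D.card - 1)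
    (htc : t.card = D.card - 1) : (s ∩ t).card = D.card - 2 := by
  have hunion := Finset.card_union_add_card_inter s t
  rw [Finset.union_eq_of_card_eq_card_sub_one hs ht hst hsc htc] at hunion
  have hlt : (s ∩ t).card < s.card := by
    refine Finset.card_lt_card (Finset.ssubset_iff_subset_ne.2 ⟨Finset.inter_subset_left, ?_⟩)
    intro h
    exact hst (Finset.eq_of_subset_of_card_le (Finset.inter_eq_left.1 h) (by omega))
  omega

theorem SimpleGraph.Walk.IsPath.append {V : Type*} {G : SimpleGraph V} {u v w : V}
    {p : G.Walk u v} {q : G.Walk v w} (hp : p.IsPath) (hq : q.IsPath)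
    (h : ∀ x ∈ p.support, x ∈ q.support → x = v) : (p.append q).IsPath := by
  have hq' := hq.support_nodup
  rw [← Walk.cons_tail_support q, List.nodup_cons] at hq'
  rw [Walk.isPath_def, Walk.support_append, List.nodup_append]
  refine ⟨hp.support_nodup, hq'.2, fun x hxp y hyq hxy => ?_⟩
  subst hxy
  exact hq'.1 (h x hxp (List.mem_of_mem_tail hyq) ▸ hyq)

theorem SimpleGraph.IsAcyclic.support_subset_of_isPath {V : Type*} [DecidableEq V]
    {G : SimpleGraph V} (hG : G.IsAcyclic) {u v : V} {p : G.Walk u v} (hp : p.IsPath)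
    (w : G.Walk u v) :
    p.support ⊆ w.support := by
  have : p = w.bypass :=
    congrArg Subtype.val ((hG.subsingleton_path u v).elim ⟨p, hp⟩ ⟨_, w.bypass_isPath⟩)
  exact this ▸ w.support_bypass_subset_support

namespace JTree

variable {V : Type} [DecidableEq V] (T : JTree V)

theorem eq_of_mem_support_of_mem_support {a b c x : T.ι} (hc : T.C c ⊆ T.C a ∪ T.C b)
    {p : T.G.Walk c a} {q : T.G.Walk c b} (hp : p.IsPath) (hq : q.IsPath)
    (hxp : x ∈ p.support) (hxq : x ∈ q.support) : x = c := by
  by_contra hxc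
  refine T.noSub c x (Ne.symm hxc) fun y hy => ?_
  rcases Finset.mem_union.1 (hc hy) with hya | hyb
  · exact T.rip c a p hp x hxp (Finset.mem_inter.2 ⟨hy, hya⟩)
  · exact T.rip c b q hq x hxq (Finset.mem_inter.2 ⟨hy, hyb⟩)

/-- The paths from `c` to `a` and to `b` meet only at `c`, so together they form the path from
`a` to `b`; this path passes through `c`, which the same argument at `a` forbids unless `a = c`. -/
theorem eq_of_subset_union_of_subset_union {a b c : T.ι} (ha : T.C a ⊆ T.C b ∪ T.C c)
    (hc : T.C c ⊆ T.C a ∪ T.C b) : a = c := by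
  obtain ⟨p, hp⟩ := T.isTree.connected.exists_isPath c a
  obtain ⟨q, hq⟩ := T.isTree.connected.exists_isPath c b
  have hpq : (p.reverse.append q).IsPath := hp.reverse.append hq fun x hxp hxq =>
    T.eq_of_mem_support_of_mem_support hc hp hq (by simpa using hxp) hxq
  have hcpq : c ∈ (p.reverse.append q).support :=
    (Walk.mem_support_append_iff p.reverse q).2 (Or.inl p.reverse.end_mem_support)
  exact (T.eq_of_mem_support_of_mem_support ha hpq hp.reverse hcpq
    p.reverse.end_mem_support).symm

def separatorsAt (i : T.ι) : Set (Finset V) := {s | ∃ j, T.G.Adj i j ∧ s = T.C i ∩ T.C j}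

theorem finite_separators : T.separators.Finite :=
  (Set.finite_range fun p : T.ι × T.ι => T.C p.1 ∩ T.C p.2).subset
    (by rintro _ ⟨i, j, -, rfl⟩; exact ⟨(i, j), rfl⟩)

variable {T}

theorem mem_separators_of_mem_separatorsAt {s : Finset V} {i : T.ι} (h : s ∈ T.separatorsAt i) :
    s ∈ T.separators := by
  obtain ⟨j, hj, rfl⟩ := h
  exact ⟨i, j, hj, rfl⟩

theorem exists_mem_separatorsAt_of_mem_separators {s : Finset V} (h : s ∈ T.separators) :
    ∃ i, s ∈ T.separatorsAt i := by
  obtain ⟨i, j, hj, rfl⟩ := h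
  exact ⟨i, j, hj, rfl⟩

theorem finite_separatorsAt (i : T.ι) : (T.separatorsAt i).Finite :=
  T.finite_separators.subset fun _ => mem_separators_of_mem_separatorsAt

theorem subset_of_mem_separatorsAt {s : Finset V} {i : T.ι} (h : s ∈ T.separatorsAt i) :
    s ⊆ T.C i := by
  obtain ⟨j, -, rfl⟩ := h
  exact Finset.inter_subset_left

variable {k : ℕ}

theorem card_of_mem_separatorsAt (hch : T.IsCherry k) {s : Finset V} {i : T.ι}
    (h : s ∈ T.separatorsAt i) : s.card = k - 1 := by
  obtain ⟨j, hj, rfl⟩ := h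
  exact hch.2 i j hj

theorem union_eq_of_mem_separatorsAt (hch : T.IsCherry k) {s t : Finset V} {i : T.ι}
    (hs : s ∈ T.separatorsAt i) (ht : t ∈ T.separatorsAt i) (hst : s ≠ t) : s ∪ t = T.C i :=
  Finset.union_eq_of_card_eq_card_sub_one (subset_of_mem_separatorsAt hs)
    (subset_of_mem_separatorsAt ht) hst (by rw [card_of_mem_separatorsAt hch hs, hch.1])
    (by rw [card_of_mem_separatorsAt hch ht, hch.1])

theorem card_inter_of_mem_separatorsAt (hch : T.IsCherry k) {s t : Finset V} {i : T.ι}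
    (hs : s ∈ T.separatorsAt i) (ht : t ∈ T.separatorsAt i) (hst : s ≠ t) :
    (s ∩ t).card = k - 2 :=
  hch.1 i ▸ Finset.card_inter_eq_card_sub_two (subset_of_mem_separatorsAt hs)
    (subset_of_mem_separatorsAt ht) hst (by rw [card_of_mem_separatorsAt hch hs, hch.1])
    (by rw [card_of_mem_separatorsAt hch ht, hch.1])

theorem ncard_separatorsAt_le_two_of_range_eq (hch : T.IsCherry k) (T' : JTree V)
    (hT' : Set.range T'.C = T.separators) (i : T.ι) : (T.separatorsAt i).ncard ≤ 2 := by
  by_contra! h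
  obtain ⟨s₁, h₁, s₂, h₂, s₃, h₃, h₁₂, h₁₃, h₂₃⟩ :=
    (Set.two_lt_ncard (finite_separatorsAt i)).1 h
  obtain ⟨a, ha⟩ : s₁ ∈ Set.range T'.C := hT' ▸ mem_separators_of_mem_separatorsAt h₁
  obtain ⟨b, hb⟩ : s₂ ∈ Set.range T'.C := hT' ▸ mem_separators_of_mem_separatorsAt h₂
  obtain ⟨c, hc⟩ : s₃ ∈ Set.range T'.C := hT' ▸ mem_separators_of_mem_separatorsAt h₃
  have hac : a = c := T'.eq_of_subset_union_of_subset_union (b := b)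
    (by rw [ha, hb, hc, union_eq_of_mem_separatorsAt hch h₂ h₃ h₂₃]
        exact subset_of_mem_separatorsAt h₁)
    (by rw [ha, hb, hc, union_eq_of_mem_separatorsAt hch h₁ h₂ h₁₂]
        exact subset_of_mem_separatorsAt h₃)
  exact h₁₃ (ha ▸ hc ▸ congrArg T'.C hac)

theorem separators_nonempty_s3 [Fintype V] (hcov : T.CoversAll)
    (hC : ∀ i, T.C i ≠ Finset.univ) : T.separators.Nonempty := by
  obtain ⟨i⟩ := T.isTree.connected.nonempty
  obtain ⟨v, hv⟩ : ∃ v, v ∉ T.C i := by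
    by_contra! h
    exact hC i (Finset.eq_univ_iff_forall.2 h)
  obtain ⟨j, hj⟩ := hcov v
  obtain ⟨w⟩ := T.isTree.connected.preconnected i j
  have hw : ¬ w.Nil := Walk.not_nil_of_ne fun h => hv (h ▸ hj)
  exact ⟨_, i, w.snd, w.adj_snd hw, rfl⟩

theorem sep_eq_of_mem_edges (hch : T.IsCherry k) {u v : T.ι} {p : T.G.Walk u v} (hp : p.IsPath)
    {A : Finset V} (hA : A.card = k - 1) (hAu : A ⊆ T.C u) (hAv : A ⊆ T.C v) {e : Sym2 T.ι}
    (he : e ∈ p.edges) : T.sep e = A := by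
  induction e using Sym2.ind with
  | h x y =>
    have hA' : A ⊆ T.C u ∩ T.C v := Finset.subset_inter hAu hAv
    have hAx := hA'.trans (T.rip u v p hp x (p.fst_mem_support_of_mem_edges he))
    have hAy := hA'.trans (T.rip u v p hp y (p.snd_mem_support_of_mem_edges he))
    exact (Finset.eq_of_subset_of_card_le (Finset.subset_inter hAx hAy)
      (by rw [hA, ← hch.2 x y (p.adj_of_mem_edges he)])).symm

def separatorGraph (T : JTree V) : SimpleGraph T.separators where
  Adj A B := A ≠ B ∧ ∃ i, A.1 ∈ T.separatorsAt i ∧ B.1 ∈ T.separatorsAt i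
  symm := ⟨fun _ _ ⟨hne, i, hA, hB⟩ => ⟨hne.symm, i, hB, hA⟩⟩
  loopless := ⟨fun _ h => h.1 rfl⟩

theorem exists_walk_separatorGraph_of_mem_separatorsAt {i : T.ι} {A B : T.separators}
    (hA : A.1 ∈ T.separatorsAt i) (hB : B.1 ∈ T.separatorsAt i) :
    ∃ q : T.separatorGraph.Walk A B, ∀ X ∈ q.support, X = A ∨ X = B := by
  by_cases hAB : A = B
  · subst hAB
    exact ⟨.nil, by simp⟩
  · exact ⟨.cons (show T.separatorGraph.Adj A B from ⟨hAB, i, hA, hB⟩) .nil, by simp⟩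

theorem exists_walk_separatorGraph (U : Finset V) {x y : T.ι} (w : T.G.Walk x y)
    (hw : ∀ z ∈ w.support, U ⊆ T.C z) {A B : T.separators} (hA : A.1 ∈ T.separatorsAt x)
    (hB : B.1 ∈ T.separatorsAt y) (hUA : U ⊆ A.1) (hUB : U ⊆ B.1) :
    ∃ q : T.separatorGraph.Walk A B, ∀ X ∈ q.support, U ⊆ X.1 := by
  induction w generalizing A with
  | nil =>
    obtain ⟨q, hq⟩ := exists_walk_separatorGraph_of_mem_separatorsAt hA hB
    exact ⟨q, fun X hX => by rcases hq X hX with rfl | rfl <;> assumption⟩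
  | @cons x z y hxz w ih =>
    let M : T.separators := ⟨T.C x ∩ T.C z, x, z, hxz, rfl⟩
    have hUM : U ⊆ M.1 := Finset.subset_inter (hw x (by simp)) (hw z (by simp))
    obtain ⟨q₁, hq₁⟩ :=
      exists_walk_separatorGraph_of_mem_separatorsAt (B := M) hA ⟨z, hxz, rfl⟩
    obtain ⟨q₂, hq₂⟩ := ih (fun z hz => hw z (by simp [hz])) (A := M)
      ⟨x, hxz.symm, Finset.inter_comm _ _⟩ hB hUM
    refine ⟨q₁.append q₂, fun X hX => ?_⟩
    rcases (Walk.mem_support_append_iff q₁ q₂).1 hX with hX | hX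
    · rcases hq₁ X hX with rfl | rfl <;> assumption
    · exact hq₂ X hX

theorem separatorGraph_connected (hne : T.separators.Nonempty) : T.separatorGraph.Connected := by
  have : Nonempty T.separators := hne.to_subtype
  refine ⟨fun A B => ?_⟩
  obtain ⟨x, hA⟩ := exists_mem_separatorsAt_of_mem_separators A.2
  obtain ⟨y, hB⟩ := exists_mem_separatorsAt_of_mem_separators B.2
  obtain ⟨w⟩ := T.isTree.connected.preconnected x y
  obtain ⟨q, -⟩ := exists_walk_separatorGraph ∅ w (by simp) hA hB (by simp) (by simp)
  exact q.reachable

theorem inter_subset_of_mem_support (hacyc : T.separatorGraph.IsAcyclic) {A B : T.separators}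
    {p : T.separatorGraph.Walk A B} (hp : p.IsPath) {X : T.separators} (hX : X ∈ p.support) :
    A.1 ∩ B.1 ⊆ X.1 := by
  obtain ⟨x, hA⟩ := exists_mem_separatorsAt_of_mem_separators A.2
  obtain ⟨y, hB⟩ := exists_mem_separatorsAt_of_mem_separators B.2
  obtain ⟨w, hw⟩ := T.isTree.connected.exists_isPath x y
  have hAB : A.1 ∩ B.1 ⊆ T.C x ∩ T.C y :=
    Finset.inter_subset_inter (subset_of_mem_separatorsAt hA) (subset_of_mem_separatorsAt hB)
  obtain ⟨q, hq⟩ := exists_walk_separatorGraph _ w (fun z hz => hAB.trans (T.rip x y w hw z hz))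
    hA hB Finset.inter_subset_left Finset.inter_subset_right
  exact hq X (hacyc.support_subset_of_isPath hp q hX)

theorem eq_or_eq_of_mem_separatorsAt (hsep : ∀ i, (T.separatorsAt i).ncard ≤ 2) {i : T.ι}
    {r s t : Finset V} (hr : r ∈ T.separatorsAt i) (hs : s ∈ T.separatorsAt i)
    (ht : t ∈ T.separatorsAt i) (hst : s ≠ t) : r = s ∨ r = t := by
  by_contra! h
  have h3 := (Set.two_lt_ncard (finite_separatorsAt i)).2
    ⟨s, hs, t, ht, r, hr, hst, h.1.symm, h.2.symm⟩
  exact (hsep i).not_gt h3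

/-- A path `A = X₀, X₁, …, Xₙ = B` of separators lifts to a trail in `T` that runs through the
nodes shared by consecutive `Xⱼ`, following edges labelled `Xⱼ` in between. The separator `Z`
records the other separator at the start node `u`; it keeps consecutive nodes distinct. -/
theorem exists_trail_of_isPath (hch : T.IsCherry k) (hsep : ∀ i, (T.separatorsAt i).ncard ≤ 2) :
    ∀ {A B : T.separators} (q : T.separatorGraph.Walk A B), q.IsPath →
      ∀ (Z : T.separators) (u : T.ι), Z.1 ∈ T.separatorsAt u → A.1 ∈ T.separatorsAt u →
      Z ≠ A → Z ≠ q.snd →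
      ∃ v, B.1 ∈ T.separatorsAt v ∧ ∃ w : T.G.Walk u v, w.IsTrail ∧
        (∀ e ∈ w.edges, ∃ X ∈ q.support, X ≠ B ∧ T.sep e = X.1) ∧ q.length ≤ w.length := by
  intro A B q
  induction q with
  | nil =>
    intro _ Z u _ hAu _ _
    exact ⟨u, hAu, .nil, by simp, by simp, le_rfl⟩
  | @cons A A₂ B hadj q ih =>
    intro hq Z u hZu hAu hZA hZA₂
    rw [Walk.snd_cons] at hZA₂
    obtain ⟨hq', hAq'⟩ := (Walk.cons_isPath_iff _ _).1 hq
    obtain ⟨hAA₂, i, hAi, hA₂i⟩ := id hadj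
    have hui : u ≠ i := by
      rintro rfl
      rcases eq_or_eq_of_mem_separatorsAt hsep hA₂i hZu hAu (Subtype.coe_ne_coe.2 hZA) with h | h
      · exact hZA₂ (Subtype.ext h).symm
      · exact hAA₂ (Subtype.ext h).symm
    obtain ⟨r, hr⟩ := T.isTree.connected.exists_isPath u i
    have hrA : ∀ e ∈ r.edges, T.sep e = A.1 := fun e he =>
      sep_eq_of_mem_edges hch hr (card_of_mem_separatorsAt hch hAu)
        (subset_of_mem_separatorsAt hAu) (subset_of_mem_separatorsAt hAi) he
    obtain ⟨v, hBv, w, hw, hwq, hlen⟩ := ih hq' A i hAi hA₂i hAA₂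
      fun h => hAq' (h ▸ q.getVert_mem_support 1)
    refine ⟨v, hBv, r.append w, ?_, fun e he => ?_, ?_⟩
    · refine (Walk.isTrail_append r w).2 ⟨hr.isTrail, hw, fun e her hew => ?_⟩
      obtain ⟨X, hX, -, hXe⟩ := hwq e hew
      exact hAq' (Subtype.ext (hXe.symm.trans (hrA e her)) ▸ hX)
    · rcases List.mem_append.1 (Walk.edges_append r w ▸ he) with he | he
      · exact ⟨A, q.support.mem_cons_self, fun h => hAq' (h ▸ q.end_mem_support), hrA e he⟩
      · obtain ⟨X, hX, hXB, hXe⟩ := hwq e he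
        exact ⟨X, List.mem_cons_of_mem _ hX, hXB, hXe⟩
    · have : 0 < r.length := Walk.not_nil_iff_lt_length.1 (Walk.not_nil_of_ne hui)
      rw [Walk.length_cons, Walk.length_append]
      omega

theorem separatorGraph_isAcyclic (hch : T.IsCherry k)
    (hsep : ∀ i, (T.separatorsAt i).ncard ≤ 2) : T.separatorGraph.IsAcyclic := by
  rintro S (_ | ⟨hadj, p⟩) hc
  · exact hc.ne_nil rfl
  have hlen : 2 ≤ p.length := by
    have := hc.three_le_length
    rw [Walk.length_cons] at this
    omega
  obtain ⟨hp, -⟩ := (Walk.cons_isCycle_iff p hadj).1 hc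
  obtain ⟨hSS₁, u, hSu, hS₁u⟩ := id hadj
  have hSp : S ≠ p.snd := fun h => by
    have := hp.getVert_injOn (show 1 ≤ p.length by omega) (le_refl p.length)
      (p.getVert_length.trans h).symm
    omega
  obtain ⟨v, hSv, w, hw, hwp, hwlen⟩ :=
    exists_trail_of_isPath hch hsep p hp S u hSu hS₁u hSS₁ hSp
  obtain ⟨r, hr⟩ := T.isTree.connected.exists_isPath v u
  have hrS : ∀ e ∈ r.edges, T.sep e = S.1 := fun e he =>
    sep_eq_of_mem_edges hch hr (card_of_mem_separatorsAt hch hSv)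
      (subset_of_mem_separatorsAt hSv) (subset_of_mem_separatorsAt hSu) he
  have htrail : (w.append r).IsTrail := (Walk.isTrail_append w r).2 ⟨hw, hr.isTrail,
    fun e hew her => by
      obtain ⟨X, -, hXS, hXe⟩ := hwp e hew
      exact hXS (Subtype.ext (hXe.symm.trans (hrS e her)))⟩
  refine T.isTree.isAcyclic _ (Walk.IsCircuit.isCycle_cycleBypass ⟨htrail, fun h => ?_⟩)
  have := congrArg Walk.length h
  rw [Walk.length_append, Walk.length_nil] at this
  omega

theorem separatorsFormCherry_of_ncard_le_two (hch : T.IsCherry k)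
    (hsep : ∀ i, (T.separatorsAt i).ncard ≤ 2) (hne : T.separators.Nonempty) :
    T.SeparatorsFormCherry k := by
  have hacyc := separatorGraph_isAcyclic hch hsep
  have hcard (A : T.separators) : A.1.card = k - 1 := by
    obtain ⟨i, hA⟩ := exists_mem_separatorsAt_of_mem_separators A.2
    exact card_of_mem_separatorsAt hch hA
  refine ⟨{ ι := T.separators
            fin := T.finite_separators.fintype
            G := T.separatorGraph
            isTree := ⟨separatorGraph_connected hne, hacyc⟩
            C := Subtype.val
            noSub := fun A B hAB hsub => hAB (Subtype.ext
              (Finset.eq_of_subset_of_card_le hsub (by rw [hcard, hcard])))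
            rip := fun _ _ _ hp _ hX => inter_subset_of_mem_support hacyc hp hX },
    ⟨hcard, fun A B ⟨hAB, i, hA, hB⟩ => ?_⟩, Subtype.range_coe⟩
  change (A.1 ∩ B.1).card = k - 1 - 1
  rw [card_inter_of_mem_separatorsAt hch hA hB (Subtype.coe_ne_coe.2 hAB)]
  omega

end JTree

/-- For a `k`-order cherry tree `T` on `V` (`2 ≤ k ≤ |V| - 1`), the
separators of `T` form a `(k-1)`-order cherry tree iff every cluster of `T` is
connected to its neighbors by at most two different separators. -/
theorem sep_cherry_iff_at_most_two_separators
    {V : Type} [Fintype V] [DecidableEq V] (d k : ℕ)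
    (hd : Fintype.card V = d) (hk2 : 2 ≤ k) (hkd : k ≤ d - 1)
    (T : JTree V) (hcov : T.CoversAll) (hch : T.IsCherry k) :
    T.SeparatorsFormCherry k ↔
      ∀ i : T.ι, ({s : Finset V | ∃ j, T.G.Adj i j ∧ s = T.C i ∩ T.C j}).ncard ≤ 2 := by
  refine ⟨fun ⟨T', _, hT'⟩ => T.ncard_separatorsAt_le_two_of_range_eq hch T' hT', fun hsep => ?_⟩
  have hC : ∀ i, T.C i ≠ Finset.univ := fun i h => by
    have := hch.1 i
    rw [h, Finset.card_univ] at this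
    omega
  exact JTree.separatorsFormCherry_of_ncard_le_two hch hsep (JTree.separators_nonempty_s3 hcov hC)
end

section
/- Let V be a finite set with |V| ≥ k + 1, let (Ω_v)_{v ∈ V} be finite nonempty types, and let P be a probability mass function on Π_{v ∈ V} Ω_v that factorizes according to some k-order cherry tree on V. Then there exists a (k+1)-order cherry tree on V according to which P factorizes. -/
open scoped BigOperators

/- The marginal of a probability mass function `P` on `Π v, Ω v` with respect to
a set `A` of coordinates: `P_A(x) = P { y | y v = x v for all v ∈ A }`. -/
open Classical in
noncomputable def marg {V : Type} [Fintype V] {Ω : V → Type} [∀ v, Fintype (Ω v)]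
    (P : (∀ v, Ω v) → ℝ) (A : Finset V) (x : ∀ v, Ω v) : ℝ :=
  ∑ y : ∀ v, Ω v, if ∀ v ∈ A, y v = x v then P y else 0

/-- `P` factorizes according to the junction tree `T`:
`P(x) ⬝ ∏_{edges {i,j}} P_{C i ∩ C j}(x) = ∏_{nodes i} P_{C i}(x)` for every `x`. -/
noncomputable def Factorizes {V : Type} [Fintype V] [DecidableEq V]
    {Ω : V → Type} [∀ v, Fintype (Ω v)]
    (T : JTree V) (P : (∀ v, Ω v) → ℝ) : Prop :=
  ∀ x : ∀ v, Ω v,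
    P x * ∏ e ∈ T.edgeFinset, marg P (T.sep e) x = ∏ i : T.ι, marg P (T.C i) x

/-!
Root `T` at a leaf `r`. Each other node `i` stands for the edge `{i, par i}` of `T`; give it the
cluster `C i ∪ C (par i)`, of size `k + 1`, and keep the tree `T - r`. Adjacent new clusters meet
in `C (par i)`, of size `k`, and the running intersection property is inherited from `T`. Distinct
edges give distinct clusters: three distinct `k`-subsets of one `(k + 1)`-set cannot satisfy the
running intersection property along a path.

Marginalizing the factorization along `T` leaf by leaf down to a single edge gives
`P_{C i ∪ C j} P_{C i ∩ C j} = P_{C i} P_{C j}` for every edge `{i, j}`. Multiplying these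
identities over all edges turns the factorization along `T` into one along the new tree.
-/

section Marginal

open Finset

variable {V : Type} [Fintype V] {Ω : V → Type} [∀ v, Fintype (Ω v)]
  {P : (∀ v, Ω v) → ℝ}

lemma marg_congr {A : Finset V} {x x' : ∀ v, Ω v} (h : ∀ v ∈ A, x v = x' v) :
    marg P A x = marg P A x' := by
  unfold marg
  refine sum_congr rfl fun y _ => ?_
  congr 1
  exact propext (forall₂_congr fun v hv => by rw [h v hv])

lemma marg_univ (x : ∀ v, Ω v) : marg P univ x = P x := by
  unfold marg
  rw [sum_eq_single x (fun y _ hy => if_neg fun h => hy (funext fun v => h v (mem_univ v)))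
    (by simp)]
  exact if_pos fun v _ => rfl

lemma marg_nonneg (hP : ∀ y, 0 ≤ P y) (A : Finset V) (x : ∀ v, Ω v) : 0 ≤ marg P A x :=
  sum_nonneg fun y _ => by split_ifs <;> simp [hP y]

lemma marg_anti (hP : ∀ y, 0 ≤ P y) {A B : Finset V} (hAB : A ⊆ B) (x : ∀ v, Ω v) :
    marg P B x ≤ marg P A x :=
  sum_le_sum fun y _ => by
    split_ifs with hB hA
    · rfl
    · exact absurd (fun v hv => hB v (hAB hv)) hA
    · exact hP y
    · rfl

lemma marg_eq_zero_of_subset (hP : ∀ y, 0 ≤ P y) {A B : Finset V} (hAB : A ⊆ B)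
    {x : ∀ v, Ω v} (h : marg P A x = 0) : marg P B x = 0 :=
  le_antisymm (h ▸ marg_anti hP hAB x) (marg_nonneg hP B x)

lemma eq_zero_of_marg_eq_zero (hP : ∀ y, 0 ≤ P y) {A : Finset V} {x : ∀ v, Ω v}
    (h : marg P A x = 0) : P x = 0 := by
  classical
  rw [← marg_univ (P := P)]
  exact marg_eq_zero_of_subset hP (subset_univ A) h

lemma prod_marg_congr {ι : Type} {s : Finset ι} {A : ι → Finset V} {B : Finset V}
    (hA : ∀ i ∈ s, A i ⊆ B) {x x' : ∀ v, Ω v} (h : ∀ v ∈ B, x v = x' v) :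
    ∏ i ∈ s, marg P (A i) x = ∏ i ∈ s, marg P (A i) x' :=
  prod_congr rfl fun i hi => marg_congr fun v hv => h v (hA i hi hv)

variable [DecidableEq V]

open Classical in
/-- Each `y` with `y =_{A \ D} x` agrees on `A` with exactly one `z` that equals `x` off `D`. -/
lemma sum_marg_eq_marg_sdiff {A D : Finset V} (hD : D ⊆ A) (x : ∀ v, Ω v) :
    ∑ z with ∀ v ∉ D, z v = x v, marg P A z = marg P (A \ D) x := by
  unfold marg
  rw [sum_comm]
  refine sum_congr rfl fun y _ => ?_
  have key : ∀ z : ∀ v, Ω v, ((∀ v ∉ D, z v = x v) ∧ ∀ v ∈ A, y v = z v) ↔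
      (z = fun v => if v ∈ D then y v else x v) ∧ ∀ v ∈ A \ D, y v = x v := by
    intro z
    constructor
    · rintro ⟨hzx, hyz⟩
      refine ⟨funext fun v => ?_, fun v hv => ?_⟩
      · split_ifs with hv
        · exact (hyz v (hD hv)).symm
        · exact hzx v hv
      · rw [mem_sdiff] at hv
        rw [hyz v hv.1, hzx v hv.2]
    · rintro ⟨rfl, hyx⟩
      refine ⟨fun v hv => if_neg hv, fun v hv => ?_⟩
      dsimp only
      split_ifs with hvD
      · rfl
      · exact hyx v (mem_sdiff.2 ⟨hv, hvD⟩)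
  rw [sum_filter]
  simp only [← ite_and, key]
  rw [sum_congr rfl fun z _ => ite_and .., sum_ite_eq']
  simp

/-- Sum the hypothesis over the `z` that agree with `x` off `C \ B`. -/
lemma marg_mul_eq_of_forall {B C : Finset V} {E F : (∀ v, Ω v) → ℝ} {x : ∀ v, Ω v}
    (hE : ∀ z, (∀ v ∈ B, z v = x v) → E z = E x)
    (hF : ∀ z, (∀ v ∈ B, z v = x v) → F z = F x)
    (h : ∀ z, marg P (C ∪ B) z * E z = marg P C z * F z) :
    marg P B x * E x = marg P (C ∩ B) x * F x := by
  classical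
  have hB : ∀ z : ∀ v, Ω v, (∀ v ∉ C \ B, z v = x v) → ∀ v ∈ B, z v = x v :=
    fun z hz v hv => hz v fun h => (mem_sdiff.1 h).2 hv
  have hCB : (C ∪ B) \ (C \ B) = B := by
    ext v
    simp only [mem_sdiff, mem_union]
    tauto
  calc marg P B x * E x
      = ∑ z with ∀ v ∉ C \ B, z v = x v, marg P (C ∪ B) z * E z := by
        rw [sum_congr rfl fun z hz => by rw [hE z (hB z (mem_filter.1 hz).2)], ← sum_mul,
          sum_marg_eq_marg_sdiff (sdiff_subset.trans subset_union_left), hCB]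
    _ = ∑ z with ∀ v ∉ C \ B, z v = x v, marg P C z * F z := sum_congr rfl fun z _ => h z
    _ = marg P (C ∩ B) x * F x := by
        rw [sum_congr rfl fun z hz => by rw [hF z (hB z (mem_filter.1 hz).2)], ← sum_mul,
          sum_marg_eq_marg_sdiff sdiff_subset, sdiff_sdiff_right_self, inf_eq_inter]

end Marginal

namespace JTree

open Finset SimpleGraph

variable {V : Type} [DecidableEq V]

lemma mem_edgeFinset {T : JTree V} {a b : T.ι} : s(a, b) ∈ T.edgeFinset ↔ T.G.Adj a b := by
  simp [edgeFinset]

lemma sep_mk {T : JTree V} (a b : T.ι) : T.sep s(a, b) = T.C a ∩ T.C b := rfl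

section Paths

variable (T : JTree V)

noncomputable def path (i j : T.ι) : T.G.Walk i j :=
  (T.isTree.existsUnique_path i j).exists.choose

lemma path_isPath (i j : T.ι) : (T.path i j).IsPath :=
  (T.isTree.existsUnique_path i j).exists.choose_spec

variable {T}

lemma eq_path {i j : T.ι} {p : T.G.Walk i j} (hp : p.IsPath) : p = T.path i j :=
  (T.isTree.existsUnique_path i j).unique hp (T.path_isPath i j)

lemma support_path_subset {i j : T.ι} (w : T.G.Walk i j) : (T.path i j).support ⊆ w.support := by
  rw [← eq_path w.bypass_isPath]
  exact w.support_bypass_subset_support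

lemma mem_support_path_comm {i j x : T.ι} :
    x ∈ (T.path i j).support ↔ x ∈ (T.path j i).support := by
  rw [← eq_path (T.path_isPath j i).reverse, Walk.support_reverse, List.mem_reverse]

lemma inter_subset_of_mem_path {i j x : T.ι} (hx : x ∈ (T.path i j).support) :
    T.C i ∩ T.C j ⊆ T.C x :=
  T.rip i j _ (T.path_isPath i j) x hx

lemma path_self (i : T.ι) : T.path i i = .nil :=
  (eq_path .nil).symm

lemma path_cons {a b c : T.ι} (h : T.G.Adj a b) (hs : a ∉ (T.path b c).support) :
    T.path a c = .cons h (T.path b c) :=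
  (eq_path ((T.path_isPath b c).cons hs)).symm

lemma path_of_adj {a b : T.ι} (h : T.G.Adj a b) : T.path a b = .cons h .nil := by
  rw [path_cons h (by simp [path_self, h.ne]), path_self]

lemma path_eq_cons_or {a b : T.ι} (h : T.G.Adj a b) (c : T.ι) :
    T.path a c = .cons h (T.path b c) ∨ T.path b c = .cons h.symm (T.path a c) := by
  by_cases hb : b ∈ (T.path a c).support
  · have hsplit := (T.path a c).take_spec hb
    rw [eq_path ((T.path_isPath a c).takeUntil hb), path_of_adj h,
      eq_path ((T.path_isPath a c).dropUntil hb)] at hsplit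
    exact Or.inl hsplit.symm
  · exact Or.inr (path_cons h.symm hb)

lemma mem_path_of_eq_or_adj {a a' b b' x : T.ι} (ha : a' = a ∨ T.G.Adj a a')
    (hb : b' = b ∨ T.G.Adj b' b) (hx : x ∈ (T.path a b).support) (hxa : x ≠ a)
    (hxb : x ≠ b) :
    x ∈ (T.path a' b').support := by
  obtain ⟨wa, hwa⟩ : ∃ w : T.G.Walk a a', ∀ y ∈ w.support, y = a ∨ y = a' := by
    rcases ha with rfl | h
    · exact ⟨.nil, by simp⟩
    · exact ⟨.cons h .nil, by simp⟩
  obtain ⟨wb, hwb⟩ : ∃ w : T.G.Walk b' b, ∀ y ∈ w.support, y = b' ∨ y = b := by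
    rcases hb with rfl | h
    · exact ⟨.nil, by simp⟩
    · exact ⟨.cons h .nil, by simp⟩
  have hx' := support_path_subset (wa.append ((T.path a' b').append wb)) hx
  simp only [Walk.mem_support_append_iff] at hx'
  rcases hx' with h | h | h
  · rcases hwa x h with rfl | rfl
    · exact absurd rfl hxa
    · exact Walk.start_mem_support _
  · exact h
  · rcases hwb x h with rfl | rfl
    · exact Walk.end_mem_support _
    · exact absurd rfl hxb

end Paths

section Rooted

variable (T : JTree V) (r : T.ι)

noncomputable def par (i : T.ι) : T.ι := (T.path i r).snd

noncomputable def depath (i : T.ι) : ℕ := (T.path i r).length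

variable {T r}

lemma path_eq_cons_par {i : T.ι} (h : i ≠ r) :
    ∃ hadj : T.G.Adj i (T.par r i), T.path i r = .cons hadj (T.path (T.par r i) r) := by
  have hn : ¬ (T.path i r).Nil := Walk.not_nil_of_ne h
  refine ⟨(T.path i r).adj_snd hn, ?_⟩
  have htail : (T.path i r).tail = T.path (T.par r i) r := eq_path (T.path_isPath i r).tail
  rw [← htail]
  exact ((T.path i r).cons_tail_eq hn).symm

lemma adj_par {i : T.ι} (h : i ≠ r) : T.G.Adj i (T.par r i) :=
  (path_eq_cons_par h).1

lemma depath_par {i : T.ι} (h : i ≠ r) : T.depath r (T.par r i) + 1 = T.depath r i := by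
  obtain ⟨_, he⟩ := path_eq_cons_par h
  simp [depath, he]

lemma par_self : T.par r r = r := by
  simp [par, path_self]

lemma par_eq_or_adj (i : T.ι) : T.par r i = i ∨ T.G.Adj i (T.par r i) := by
  by_cases h : i = r
  · exact Or.inl (h ▸ par_self)
  · exact Or.inr (adj_par h)

lemma par_par_ne {i : T.ι} (h : i ≠ r) (h' : T.par r i ≠ r) : T.par r (T.par r i) ≠ i := by
  intro he
  have h1 := depath_par h
  have h2 := depath_par h'
  rw [he] at h2
  omega

lemma eq_par_or_eq_par {a b : T.ι} (h : T.G.Adj a b) :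
    (a ≠ r ∧ T.par r a = b) ∨ (b ≠ r ∧ T.par r b = a) := by
  have key : ∀ {a b : T.ι} (h : T.G.Adj a b), T.path a r = .cons h (T.path b r) →
      a ≠ r ∧ T.par r a = b := fun h he =>
    ⟨by rintro rfl; simpa [path_self] using congrArg Walk.length he, by simp [par, he]⟩
  exact (path_eq_cons_or h r).imp (key h) (key h.symm)

lemma par_eq_iff_of_forall_adj_iff {c₀ i : T.ι} (hr : ∀ x, T.G.Adj r x ↔ x = c₀)
    (hi : i ≠ r) :
    T.par r i = r ↔ i = c₀ := by
  refine ⟨fun h => (hr i).1 (h ▸ adj_par hi).symm, ?_⟩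
  rintro rfl
  rcases eq_par_or_eq_par ((hr i).2 rfl) with ⟨hne, _⟩ | ⟨_, h⟩
  · exact absurd rfl hne
  · exact h

lemma mk_par_injOn {i j : T.ι} (hi : i ≠ r) (hj : j ≠ r)
    (h : s(i, T.par r i) = s(j, T.par r j)) : i = j := by
  rcases Sym2.eq_iff.1 h with ⟨h1, -⟩ | ⟨h1, h2⟩
  · exact h1
  · exact absurd (h2 ▸ h1).symm (par_par_ne hi (h2 ▸ hj))

lemma edgeFinset_eq_image_par :
    T.edgeFinset = (univ.erase r).image fun i => s(i, T.par r i) := by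
  ext e
  induction e with
  | _ a b =>
    simp only [mem_edgeFinset, mem_image, mem_erase, mem_univ, and_true]
    constructor
    · intro h
      rcases eq_par_or_eq_par (r := r) h with ⟨ha, hp⟩ | ⟨hb, hp⟩
      · exact ⟨a, ha, by rw [hp]⟩
      · exact ⟨b, hb, by rw [hp, Sym2.eq_swap]⟩
    · rintro ⟨i, hi, he⟩
      rw [← mem_edgeFinset, ← he, mem_edgeFinset]
      exact adj_par hi

lemma prod_edgeFinset_eq_prod_par {M : Type} [CommMonoid M] (f : Sym2 T.ι → M) :
    ∏ e ∈ T.edgeFinset, f e = ∏ i ∈ univ.erase r, f s(i, T.par r i) := by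
  rw [edgeFinset_eq_image_par (r := r), prod_image fun i hi j hj =>
    mk_par_injOn (mem_erase.1 hi).1 (mem_erase.1 hj).1]

end Rooted

variable {T : JTree V} {k : ℕ}

section Convex

variable (T) in
def IsConvex (W : Finset T.ι) : Prop :=
  ∀ i ∈ W, ∀ j ∈ W, ∀ x ∈ (T.path i j).support, x ∈ W

variable (T) in
open Classical in
noncomputable def edgesIn (W : Finset T.ι) : Finset (Sym2 T.ι) :=
  T.edgeFinset.filter fun e => ∀ a ∈ e, a ∈ W

lemma mem_edgesIn {W : Finset T.ι} {a b : T.ι} :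
    s(a, b) ∈ T.edgesIn W ↔ T.G.Adj a b ∧ a ∈ W ∧ b ∈ W := by
  simp [edgesIn, mem_edgeFinset]

lemma edgesIn_univ : T.edgesIn univ = T.edgeFinset := by
  simp [edgesIn]

lemma isConvex_pair {a b : T.ι} (h : T.G.Adj a b) : T.IsConvex {a, b} := by
  intro i hi j hj x hx
  simp only [mem_insert, mem_singleton] at hi hj ⊢
  rcases hi with rfl | rfl <;> rcases hj with rfl | rfl <;>
    simp [path_self, path_of_adj h, path_of_adj h.symm] at hx <;> tauto

lemma edgesIn_pair {a b : T.ι} (h : T.G.Adj a b) : T.edgesIn {a, b} = {s(a, b)} := by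
  ext e
  induction e with
  | _ x y =>
    simp only [mem_edgesIn, mem_insert, mem_singleton, Sym2.eq_iff]
    constructor
    · rintro ⟨hxy, rfl | rfl, rfl | rfl⟩ <;> simp_all
    · rintro (⟨rfl, rfl⟩ | ⟨rfl, rfl⟩)
      · simp [h]
      · simp [h.symm]

lemma exists_adj_of_ne_univ {W : Finset T.ι} (hW0 : W.Nonempty) (hW : W ≠ univ) :
    ∃ ℓ ∉ W, ∃ n ∈ W, T.G.Adj ℓ n := by
  obtain ⟨w, hw⟩ := hW0
  obtain ⟨z, -, hz⟩ := exists_of_ssubset (ssubset_univ_iff.2 hW)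
  obtain ⟨d, -, hd, hd'⟩ := (T.path w z).exists_boundary_dart (W : Set T.ι) hw hz
  exact ⟨d.snd, hd', d.fst, hd, d.adj.symm⟩

section Insert

variable {W : Finset T.ι} (hW : T.IsConvex W) {ℓ n : T.ι} (hℓ : ℓ ∉ W) (hn : n ∈ W)
  (h : T.G.Adj ℓ n)

include hW hℓ hn in
lemma path_eq_cons_of_isConvex {m : T.ι} (hm : m ∈ W) : T.path ℓ m = .cons h (T.path n m) :=
  path_cons h fun hmem => hℓ (hW n hn m hm ℓ hmem)

include hW hℓ hn h in
lemma eq_of_adj_of_isConvex {m : T.ι} (hm : m ∈ W) (hℓm : T.G.Adj ℓ m) : m = n := by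
  have hlen := congrArg Walk.length
    ((path_of_adj hℓm).symm.trans (path_eq_cons_of_isConvex hW hℓ hn h hm))
  simp only [Walk.length_cons, Walk.length_nil, zero_add] at hlen
  exact (Walk.eq_of_length_eq_zero (by omega : (T.path n m).length = 0)).symm

include hW hℓ hn h in
lemma isConvex_insert : T.IsConvex (insert ℓ W) := by
  have hℓW : ∀ j ∈ W, ∀ x ∈ (T.path ℓ j).support, x ∈ insert ℓ W := by
    intro j hj x hx
    rw [path_eq_cons_of_isConvex hW hℓ hn h hj, Walk.support_cons, List.mem_cons] at hx
    rcases hx with rfl | hx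
    · exact mem_insert_self _ _
    · exact mem_insert_of_mem (hW n hn j hj x hx)
  intro i hi j hj x hx
  rcases mem_insert.1 hi with hi | hi <;> rcases mem_insert.1 hj with hj | hj
  · rw [hi, hj, path_self] at hx
    simp_all
  · exact hℓW j hj x (hi ▸ hx)
  · exact hℓW i hi x (mem_support_path_comm.1 (hj ▸ hx))
  · exact mem_insert_of_mem (hW i hi j hj x hx)

include hW hℓ hn h in
lemma edgesIn_insert : T.edgesIn (insert ℓ W) = insert s(ℓ, n) (T.edgesIn W) := by
  ext e
  induction e with
  | _ a b =>
    have hadj : ∀ {m}, m ∈ W → T.G.Adj ℓ m → m = n := eq_of_adj_of_isConvex hW hℓ hn h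
    simp only [mem_insert, mem_edgesIn, Sym2.eq_iff]
    constructor
    · rintro ⟨hab, rfl | ha, rfl | hb⟩
      · exact absurd hab (T.G.loopless.irrefl _)
      · exact Or.inl (Or.inl ⟨rfl, hadj hb hab⟩)
      · exact Or.inl (Or.inr ⟨hadj ha hab.symm, rfl⟩)
      · exact Or.inr ⟨hab, ha, hb⟩
    · rintro ((⟨rfl, rfl⟩ | ⟨rfl, rfl⟩) | ⟨hab, ha, hb⟩)
      · exact ⟨h, Or.inl rfl, Or.inr hn⟩
      · exact ⟨h.symm, Or.inr hn, Or.inl rfl⟩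
      · exact ⟨hab, Or.inr ha, Or.inr hb⟩

include hW hℓ hn h in
lemma inter_biUnion_of_isConvex : T.C ℓ ∩ W.biUnion T.C = T.C ℓ ∩ T.C n := by
  ext v
  simp only [mem_inter, mem_biUnion]
  refine ⟨fun ⟨hv, m, hm, hvm⟩ => ⟨hv, ?_⟩, fun ⟨hv, hvn⟩ => ⟨hv, n, hn, hvn⟩⟩
  have hnm : n ∈ (T.path ℓ m).support := by
    simp [path_eq_cons_of_isConvex hW hℓ hn h hm]
  exact inter_subset_of_mem_path hnm (mem_inter.2 ⟨hv, hvm⟩)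

end Insert

end Convex

lemma IsCherry.eq_or_eq_of_mem_path (hch : T.IsCherry k) {U : Finset V} (hU : U.card = k + 1)
    {x y z : T.ι} (hy : y ∈ (T.path x z).support) (hxU : T.C x ⊆ U) (hyU : T.C y ⊆ U)
    (hzU : T.C z ⊆ U) : y = x ∨ y = z := by
  by_contra! hne
  -- the element of `U` missing from `C y` then lies in `C x ∩ C z`
  obtain ⟨u, hu⟩ : ∃ u, U \ T.C y = {u} :=
    card_eq_one.1 (by rw [card_sdiff_of_subset hyU, hU, hch.1]; omega)
  have hmem : ∀ w, w ≠ y → T.C w ⊆ U → u ∈ T.C w := by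
    intro w hw hwU
    obtain ⟨a, haw, hay⟩ := not_subset.1 (T.noSub w y hw)
    have ha : a ∈ U \ T.C y := mem_sdiff.2 ⟨hwU haw, hay⟩
    rw [hu, mem_singleton] at ha
    exact ha ▸ haw
  have hu' : u ∉ T.C y := (mem_sdiff.1 (hu ▸ mem_singleton_self u)).2
  exact hu' (inter_subset_of_mem_path hy
    (mem_inter.2 ⟨hmem x hne.1.symm hxU, hmem z hne.2.symm hzU⟩))

variable (T) in
noncomputable def edgeCluster (r i : T.ι) : Finset V := T.C i ∪ T.C (T.par r i)

section EdgeCluster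

variable {r : T.ι}

lemma IsCherry.card_edgeCluster (hch : T.IsCherry k) (hk : 1 ≤ k) {i : T.ι} (hi : i ≠ r) :
    (T.edgeCluster r i).card = k + 1 := by
  have h := card_union_add_card_inter (T.C i) (T.C (T.par r i))
  rw [hch.1, hch.1, hch.2 _ _ (adj_par hi)] at h
  rw [edgeCluster]
  omega

lemma inter_edgeCluster_par {i : T.ι} (hi : i ≠ r) (hp : T.par r i ≠ r) :
    T.edgeCluster r i ∩ T.edgeCluster r (T.par r i) = T.C (T.par r i) := by
  have hw : (Walk.cons (adj_par hi) (.cons (adj_par hp) .nil)).IsPath := by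
    simp [Walk.cons_isPath_iff, (adj_par hp).ne, (adj_par hi).ne, (par_par_ne hi hp).symm]
  have hsub : T.C i ∩ T.C (T.par r (T.par r i)) ⊆ T.C (T.par r i) := T.rip _ _ _ hw _ (by simp)
  ext v
  simp only [edgeCluster, mem_inter, mem_union]
  have := @hsub v
  simp only [mem_inter] at this
  tauto

lemma IsCherry.not_edgeCluster_subset (hch : T.IsCherry k) (hk : 1 ≤ k) {i j : T.ι}
    (hi : i ≠ r) (hj : j ≠ r) (hij : i ≠ j) : ¬ T.edgeCluster r i ⊆ T.edgeCluster r j := by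
  intro hsub
  have hU := hch.card_edgeCluster hk hj
  have heq : T.edgeCluster r i = T.edgeCluster r j :=
    eq_of_subset_of_card_le hsub (by rw [hU, hch.card_edgeCluster hk hi])
  have hiU : T.C i ⊆ T.edgeCluster r j := heq ▸ subset_union_left
  have hpiU : T.C (T.par r i) ⊆ T.edgeCluster r j := heq ▸ subset_union_right
  have hjU : T.C j ⊆ T.edgeCluster r j := subset_union_left
  have hpjU : T.C (T.par r j) ⊆ T.edgeCluster r j := subset_union_right
  -- so none of `i, par i, j, par j` lies strictly between two others on a path
  rcases path_eq_cons_or (adj_par hj) i with he | he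
  · have hpj : T.par r j = i :=
      (hch.eq_or_eq_of_mem_path hU (by simp [he]) hjU hpjU hiU).resolve_left (adj_par hj).ne'
    rcases path_eq_cons_or (adj_par hi) j with he' | he'
    · have hpi : T.par r i = j :=
        (hch.eq_or_eq_of_mem_path hU (by simp [he']) hiU hpiU hjU).resolve_left (adj_par hi).ne'
      exact par_par_ne hj (hpj ▸ hi) (by rw [hpj, hpi])
    · rcases hch.eq_or_eq_of_mem_path hU (by simp [he']) hpiU hiU hjU with h | h
      · exact (adj_par hi).ne h
      · exact hij h
  · rcases hch.eq_or_eq_of_mem_path hU (by simp [he]) hpjU hjU hiU with h | h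
    · exact (adj_par hj).ne h
    · exact hij h.symm

lemma inter_edgeCluster_subset {a b x : T.ι} (hx : x ∈ (T.path a b).support) :
    T.edgeCluster r a ∩ T.edgeCluster r b ⊆ T.edgeCluster r x := by
  by_cases hxa : x = a
  · exact hxa ▸ inter_subset_left
  by_cases hxb : x = b
  · exact hxb ▸ inter_subset_right
  have key : ∀ a' b', (a' = a ∨ T.G.Adj a a') → (b' = b ∨ T.G.Adj b' b) →
      ∀ v ∈ T.C a', v ∈ T.C b' → v ∈ T.edgeCluster r x := fun a' b' ha hb v ha' hb' =>
    mem_union_left _ (inter_subset_of_mem_path (mem_path_of_eq_or_adj ha hb hx hxa hxb)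
      (mem_inter.2 ⟨ha', hb'⟩))
  have hpb := (par_eq_or_adj (r := r) b).imp_right Adj.symm
  intro v hv
  simp only [edgeCluster, mem_inter, mem_union] at hv
  rcases hv with ⟨ha | ha, hb | hb⟩
  · exact key a b (.inl rfl) (.inl rfl) v ha hb
  · exact key a _ (.inl rfl) hpb v ha hb
  · exact key _ b (par_eq_or_adj a) (.inl rfl) v ha hb
  · exact key _ _ (par_eq_or_adj a) hpb v ha hb

end EdgeCluster

lemma IsCherry.one_le (hch : T.IsCherry k) (hcov : T.CoversAll) (v : V) : 1 ≤ k := by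
  obtain ⟨i, hi⟩ := hcov v
  rw [← hch.1 i]
  exact card_pos.2 ⟨v, hi⟩

lemma IsCherry.nontrivial [Fintype V] (hch : T.IsCherry k) (hcov : T.CoversAll)
    (hV : k < Fintype.card V) : Nontrivial T.ι := by
  by_contra h
  rw [not_nontrivial_iff_subsingleton] at h
  obtain ⟨i₀⟩ := T.isTree.connected.nonempty
  have hsub : (univ : Finset V) ⊆ T.C i₀ := fun v _ =>
    let ⟨i, hi⟩ := hcov v
    Subsingleton.elim i i₀ ▸ hi
  have := card_le_card hsub
  rw [card_univ, hch.1] at this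
  omega

lemma isTree_induce_compl_of_forall_adj_iff {r c₀ : T.ι} (hr : ∀ x, T.G.Adj r x ↔ x = c₀) :
    (T.G.induce {r}ᶜ).IsTree := by
  classical
  refine ⟨T.isTree.connected.induce_compl_singleton_of_degree_eq_one ?_,
    T.isTree.isAcyclic.induce _⟩
  exact degree_eq_one_iff_existsUnique_adj.2 ⟨c₀, (hr c₀).2 rfl, fun y hy => (hr y).1 hy⟩

variable (T) in
/-- The node `i` stands for the edge `{i, par r i}` of `T`. -/
noncomputable def pruneLeaf (hch : T.IsCherry k) (hk : 1 ≤ k) (r c₀ : T.ι)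
    (hr : ∀ x, T.G.Adj r x ↔ x = c₀) : JTree V where
  ι := ({r}ᶜ : Set T.ι)
  G := T.G.induce {r}ᶜ
  isTree := isTree_induce_compl_of_forall_adj_iff hr
  C i := T.edgeCluster r i
  noSub i j hij := hch.not_edgeCluster_subset hk i.2 j.2 (Subtype.coe_injective.ne hij)
  rip i j p hp x hx := by
    have hpath := eq_path (hp.map (f := (Embedding.induce {r}ᶜ).toHom) Subtype.val_injective)
    have hx' : x.1 ∈ (p.map (Embedding.induce {r}ᶜ).toHom).support := by
      rw [Walk.support_map]
      exact List.mem_map_of_mem hx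
    exact inter_edgeCluster_subset (hpath ▸ hx')

section PruneLeaf

variable {hch : T.IsCherry k} {hk : 1 ≤ k} {r c₀ : T.ι} {hr : ∀ x, T.G.Adj r x ↔ x = c₀}

lemma coversAll_pruneLeaf (hcov : T.CoversAll) : (T.pruneLeaf hch hk r c₀ hr).CoversAll := by
  intro v
  obtain ⟨i, hi⟩ := hcov v
  by_cases hir : i = r
  · subst hir
    have hc₀ : c₀ ≠ i := ((hr c₀).2 rfl).ne'
    refine ⟨⟨c₀, hc₀⟩, ?_⟩
    show v ∈ T.C c₀ ∪ T.C (T.par i c₀)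
    rw [(par_eq_iff_of_forall_adj_iff hr hc₀).2 rfl]
    exact mem_union_right _ hi
  · exact ⟨⟨i, hir⟩, mem_union_left _ hi⟩

lemma isCherry_pruneLeaf : (T.pruneLeaf hch hk r c₀ hr).IsCherry (k + 1) := by
  refine ⟨fun i => hch.card_edgeCluster hk i.2, fun a b hab => ?_⟩
  show (T.edgeCluster r a.1 ∩ T.edgeCluster r b.1).card = k + 1 - 1
  rcases eq_par_or_eq_par (r := r) (show T.G.Adj a.1 b.1 from hab) with ⟨ha, hp⟩ | ⟨hb, hp⟩
  · rw [← hp, inter_edgeCluster_par ha (hp ▸ b.2), hch.1, Nat.add_sub_cancel]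
  · rw [inter_comm, ← hp, inter_edgeCluster_par hb (hp ▸ a.2), hch.1, Nat.add_sub_cancel]

lemma prod_edgeFinset_pruneLeaf {M : Type} [CommMonoid M] (f : Finset V → M) :
    ∏ e ∈ (T.pruneLeaf hch hk r c₀ hr).edgeFinset, f ((T.pruneLeaf hch hk r c₀ hr).sep e)
      = ∏ i ∈ (univ.erase r).erase c₀, f (T.C (T.par r i)) := by
  have hmem : ∀ i ∈ (univ.erase r).erase c₀,
      i ∈ ({r}ᶜ : Set T.ι) ∧ T.par r i ∈ ({r}ᶜ : Set T.ι) := by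
    intro i hi
    obtain ⟨hic, hi⟩ := mem_erase.1 hi
    have hir := (mem_erase.1 hi).1
    exact ⟨hir, fun h => hic ((par_eq_iff_of_forall_adj_iff hr hir).1 h)⟩
  symm
  refine prod_bij (fun i hi => s(⟨i, (hmem i hi).1⟩, ⟨T.par r i, (hmem i hi).2⟩))
    (fun i hi => mem_edgeFinset.2 (adj_par (hmem i hi).1))
    (fun i hi j hj h => mk_par_injOn (hmem i hi).1 (hmem j hj).1
      (congrArg (Sym2.map Subtype.val) h))
    (fun e he => ?_)
    (fun i hi => congrArg f (inter_edgeCluster_par (hmem i hi).1 (hmem i hi).2).symm)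
  induction e with
  | _ a b =>
    have hab : T.G.Adj a.1 b.1 := (mem_edgeFinset (T := T.pruneLeaf hch hk r c₀ hr)).1 he
    rcases eq_par_or_eq_par (r := r) hab with ⟨ha, hp⟩ | ⟨hb, hp⟩
    · have hac : a.1 ≠ c₀ := fun h => b.2 (hp ▸ (par_eq_iff_of_forall_adj_iff hr ha).2 h)
      exact ⟨a.1, mem_erase.2 ⟨hac, mem_erase.2 ⟨ha, mem_univ _⟩⟩,
        Sym2.eq_iff.2 (Or.inl ⟨rfl, Subtype.ext hp⟩)⟩
    · have hbc : b.1 ≠ c₀ := fun h => a.2 (hp ▸ (par_eq_iff_of_forall_adj_iff hr hb).2 h)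
      exact ⟨b.1, mem_erase.2 ⟨hbc, mem_erase.2 ⟨hb, mem_univ _⟩⟩,
        Sym2.eq_iff.2 (Or.inr ⟨rfl, Subtype.ext hp⟩)⟩

end PruneLeaf

section Factorization

variable [Fintype V] {Ω : V → Type} [∀ v, Fintype (Ω v)] {P : (∀ v, Ω v) → ℝ}

/-- Downward induction on `W`: from `insert ℓ W`, where `ℓ` is a neighbour of `W`, sum out the
coordinates of `C ℓ` that no cluster of `W` contains. -/
lemma _root_.Factorizes.marg_biUnion_mul_prod_edgesIn (hfac : Factorizes T P)
    (hP : ∀ y, 0 ≤ P y) (hcov : T.CoversAll) {W : Finset T.ι} (hW0 : W.Nonempty)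
    (hW : T.IsConvex W) (x : ∀ v, Ω v) :
    marg P (W.biUnion T.C) x * ∏ e ∈ T.edgesIn W, marg P (T.sep e) x
      = ∏ i ∈ W, marg P (T.C i) x := by
  refine strongDownwardInduction (n := Fintype.card T.ι)
    (p := fun W => W.Nonempty → T.IsConvex W → ∀ x, marg P (W.biUnion T.C) x *
      ∏ e ∈ T.edgesIn W, marg P (T.sep e) x = ∏ i ∈ W, marg P (T.C i) x)
    (fun W ih _ hW0 hW x => ?_) W (card_le_univ W) hW0 hW x
  by_cases hWu : W = univ
  · subst hWu
    have hcovU : univ.biUnion T.C = univ := eq_univ_of_forall fun v =>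
      let ⟨i, hi⟩ := hcov v
      mem_biUnion.2 ⟨i, mem_univ i, hi⟩
    rw [hcovU, edgesIn_univ, marg_univ]
    exact hfac x
  obtain ⟨ℓ, hℓ, n, hn, h⟩ := exists_adj_of_ne_univ hW0 hWu
  have hB : ∀ i ∈ W, T.C i ⊆ W.biUnion T.C := fun i hi => subset_biUnion_of_mem T.C hi
  have hsep : ∀ e ∈ T.edgesIn W, T.sep e ⊆ W.biUnion T.C := by
    intro e he
    induction e with
    | _ a b => exact inter_subset_right.trans (hB b (mem_edgesIn.1 he).2.2)
  have hS : T.C ℓ ∩ T.C n ⊆ W.biUnion T.C := inter_subset_right.trans (hB n hn)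
  have hℓn : s(ℓ, n) ∉ T.edgesIn W := fun he => hℓ (mem_edgesIn.1 he).2.1
  have hstep := marg_mul_eq_of_forall (B := W.biUnion T.C) (C := T.C ℓ) (x := x)
    (E := fun z => marg P (T.C ℓ ∩ T.C n) z * ∏ e ∈ T.edgesIn W, marg P (T.sep e) z)
    (F := fun z => ∏ i ∈ W, marg P (T.C i) z)
    (fun z hz => by rw [marg_congr fun v hv => hz v (hS hv), prod_marg_congr hsep hz])
    (fun z hz => prod_marg_congr hB hz)
    (fun z => by
      have := ih (card_le_univ _) (ssubset_insert hℓ) (insert_nonempty ℓ W)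
        (isConvex_insert hW hℓ hn h) z
      rwa [biUnion_insert, edgesIn_insert hW hℓ hn h, prod_insert hℓn, prod_insert hℓ,
        sep_mk] at this)
  rw [inter_biUnion_of_isConvex hW hℓ hn h] at hstep
  by_cases h0 : marg P (T.C ℓ ∩ T.C n) x = 0
  · rw [marg_eq_zero_of_subset hP hS h0, zero_mul]
    exact (prod_eq_zero hn (marg_eq_zero_of_subset hP inter_subset_right h0)).symm
  · exact mul_left_cancel₀ h0 (by rw [← hstep]; ring)

lemma _root_.Factorizes.marg_union_mul_marg_inter (hfac : Factorizes T P) (hP : ∀ y, 0 ≤ P y)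
    (hcov : T.CoversAll) {a b : T.ι} (h : T.G.Adj a b) (x : ∀ v, Ω v) :
    marg P (T.C a ∪ T.C b) x * marg P (T.C a ∩ T.C b) x
      = marg P (T.C a) x * marg P (T.C b) x := by
  have := hfac.marg_biUnion_mul_prod_edgesIn hP hcov (insert_nonempty a {b}) (isConvex_pair h) x
  rwa [biUnion_insert, singleton_biUnion, edgesIn_pair h, prod_singleton, sep_mk,
    prod_pair h.ne] at this

lemma _root_.Factorizes.mul_prod_marg_par (hfac : Factorizes T P) (hP : ∀ y, 0 ≤ P y)
    (hcov : T.CoversAll) {r c₀ : T.ι} (hr : ∀ x, T.G.Adj r x ↔ x = c₀) (x : ∀ v, Ω v) :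
    P x * ∏ i ∈ (univ.erase r).erase c₀, marg P (T.C (T.par r i)) x
      = ∏ i ∈ univ.erase r, marg P (T.edgeCluster r i) x := by
  have hc₀ : c₀ ∈ univ.erase r := mem_erase.2 ⟨((hr c₀).2 rfl).ne', mem_univ _⟩
  have hfacx := hfac x
  rw [prod_edgeFinset_eq_prod_par (r := r)] at hfacx
  set σ := ∏ i ∈ univ.erase r, marg P (T.sep s(i, T.par r i)) x
  by_cases hσ : σ = 0
  · obtain ⟨i, hi, h0⟩ := prod_eq_zero_iff.1 hσ
    rw [eq_zero_of_marg_eq_zero hP h0, zero_mul]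
    exact (prod_eq_zero hi (marg_eq_zero_of_subset hP inter_subset_union h0)).symm
  refine mul_right_cancel₀ hσ ?_
  calc (P x * ∏ i ∈ (univ.erase r).erase c₀, marg P (T.C (T.par r i)) x) * σ
      = (marg P (T.C r) x * ∏ i ∈ univ.erase r, marg P (T.C i) x)
          * ∏ i ∈ (univ.erase r).erase c₀, marg P (T.C (T.par r i)) x := by
        rw [mul_prod_erase univ (fun i => marg P (T.C i) x) (mem_univ r), ← hfacx]
        ring
    _ = ∏ i ∈ univ.erase r, (marg P (T.C i) x * marg P (T.C (T.par r i)) x) := by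
        rw [prod_mul_distrib, ← mul_prod_erase _ (fun i => marg P (T.C (T.par r i)) x) hc₀,
          (par_eq_iff_of_forall_adj_iff hr (mem_erase.1 hc₀).1).2 rfl]
        ring
    _ = (∏ i ∈ univ.erase r, marg P (T.edgeCluster r i) x) * σ := by
        rw [← prod_mul_distrib]
        exact prod_congr rfl fun i hi =>
          (hfac.marg_union_mul_marg_inter hP hcov (adj_par (mem_erase.1 hi).1) x).symm

lemma factorizes_pruneLeaf (hfac : Factorizes T P) (hP : ∀ y, 0 ≤ P y) (hcov : T.CoversAll)
    {hch : T.IsCherry k} {hk : 1 ≤ k} {r c₀ : T.ι} {hr : ∀ x, T.G.Adj r x ↔ x = c₀} :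
    Factorizes (T.pruneLeaf hch hk r c₀ hr) P := by
  intro x
  rw [prod_edgeFinset_pruneLeaf fun A => marg P A x, hfac.mul_prod_marg_par hP hcov hr x]
  exact prod_subtype _ (fun i => by simp) fun i => marg P (T.edgeCluster r i) x

end Factorization

end JTree

theorem cherry_tree_pmf_extends_to_higher_order_general
    {V : Type} [Fintype V] [DecidableEq V] (k : ℕ)
    {Ω : V → Type} [∀ v, Fintype (Ω v)]
    (hV : k + 1 ≤ Fintype.card V)
    (P : (∀ v, Ω v) → ℝ) (hP0 : ∀ y, 0 ≤ P y)
    (T : JTree V) (hcov : T.CoversAll) (hch : T.IsCherry k)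
    (hfac : Factorizes T P) :
    ∃ T' : JTree V, T'.CoversAll ∧ T'.IsCherry (k + 1) ∧ Factorizes T' P := by
  classical
  obtain ⟨v⟩ : Nonempty V := Fintype.card_pos_iff.1 (by omega)
  have hk := hch.one_le hcov v
  have := hch.nontrivial hcov hV
  obtain ⟨r, hr⟩ := T.isTree.exists_vert_degree_one_of_nontrivial
  obtain ⟨c₀, hrc₀, hc₀⟩ := SimpleGraph.degree_eq_one_iff_existsUnique_adj.1 hr
  have hleaf : ∀ x, T.G.Adj r x ↔ x = c₀ := fun x => ⟨hc₀ x, fun h => h ▸ hrc₀⟩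
  exact ⟨T.pruneLeaf hch hk r c₀ hleaf, JTree.coversAll_pruneLeaf hcov,
    JTree.isCherry_pruneLeaf, JTree.factorizes_pruneLeaf hfac hP0 hcov⟩

/-- a probability mass function on a finite product that factorizes
according to some `k`-order cherry tree on `V` (with `|V| ≥ k + 1`) also factorizes
according to some `(k+1)`-order cherry tree on `V`. -/
theorem cherry_tree_pmf_extends_to_higher_order
    {V : Type} [Fintype V] [DecidableEq V] (k : ℕ)
    {Ω : V → Type} [∀ v, Fintype (Ω v)] [∀ v, Nonempty (Ω v)]
    (hV : k + 1 ≤ Fintype.card V)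
    (P : (∀ v, Ω v) → ℝ) (hP0 : ∀ y, 0 ≤ P y) (hP1 : ∑ y : ∀ v, Ω v, P y = 1)
    (T : JTree V) (hcov : T.CoversAll) (hch : T.IsCherry k)
    (hfac : Factorizes T P) :
    ∃ T' : JTree V, T'.CoversAll ∧ T'.IsCherry (k + 1) ∧ Factorizes T' P :=
  cherry_tree_pmf_extends_to_higher_order_general k hV P hP0 T hcov hch hfac
end

section
/- Let K be a finite set and let a, b, c be three distinct elements of K (so |K| ≥ 3). Then there is no junction tree whose set of clusters is exactly the three sets K \ {a}, K \ {b}, K \ {c}: every tree on three nodes is a path, and for any arrangement of these three sets as a path X — Y — Z, the running intersection property fails, i.e., X ∩ Z is not contained in Y. -/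
section Aux

variable {ι : Type}

lemma path_mid_or_adj (G : SimpleGraph ι) {i j k : ι}
    (hik : i ≠ k)
    (hall : ∀ m : ι, m = i ∨ m = j ∨ m = k)
    (p : G.Walk i k) : j ∈ p.support ∨ G.Adj i k := by
  cases p with
  | nil => exact absurd rfl hik
  | @cons _ m _ h q =>
    rcases hall m with hm | hm | hm
    · exact absurd hm.symm h.ne
    · subst hm
      exact Or.inl (by simp [SimpleGraph.Walk.support_cons, q.start_mem_support])
    · subst hm
      exact Or.inr h

end Aux

/-- for distinct `a, b, c` in a finite set `K`, there is no junction
tree whose set of clusters is exactly `{K \ {a}, K \ {b}, K \ {c}}`; indeed for any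
arrangement of these three sets as a path `X — Y — Z` the running intersection
property `X ∩ Z ⊆ Y` fails. -/
theorem no_junction_tree_on_three_coerased_sets
    {V : Type} [DecidableEq V] (K : Finset V) (a b c : V)
    (ha : a ∈ K) (hb : b ∈ K) (hc : c ∈ K)
    (hab : a ≠ b) (hac : a ≠ c) (hbc : b ≠ c) :
    (¬ ∃ T : JTree V,
        Set.range T.C = {K.erase a, K.erase b, K.erase c}) ∧
    (∀ X Y Z : Finset V,
        ({X, Y, Z} : Set (Finset V)) = {K.erase a, K.erase b, K.erase c} →
        X ≠ Y → Y ≠ Z → X ≠ Z → ¬ X ∩ Z ⊆ Y) := by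
  -- distinct erased sets
  have hne : ∀ u v : V, u ∈ K → v ∈ K → u ≠ v → K.erase u ≠ K.erase v := by
    intro u v hu hv huv h
    have hv' : v ∈ K.erase u := Finset.mem_erase.2 ⟨fun e => huv e.symm, hv⟩
    rw [h] at hv'
    exact (Finset.mem_erase.1 hv').1 rfl
  -- key: if W is one of the erased sets and W ≠ K.erase u (u ∈ {a,b,c} ∩ K), then u ∈ W
  have key : ∀ u : V, u ∈ K →
      ∀ W ∈ ({K.erase a, K.erase b, K.erase c} : Set (Finset V)),
      W ≠ K.erase u → u ∈ W := by
    intro u hu W hW hWu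
    rcases hW with h | h | h <;> subst h <;>
      exact Finset.mem_erase.2 ⟨fun e => hWu (by rw [e]), hu⟩
  have part2 : ∀ X Y Z : Finset V,
      ({X, Y, Z} : Set (Finset V)) = {K.erase a, K.erase b, K.erase c} →
      X ≠ Y → Y ≠ Z → X ≠ Z → ¬ X ∩ Z ⊆ Y := by
    intro X Y Z hset hXY hYZ hXZ hsub
    have hXmem : X ∈ ({K.erase a, K.erase b, K.erase c} : Set (Finset V)) := by
      rw [← hset]; exact Or.inl rfl
    have hYmem : Y ∈ ({K.erase a, K.erase b, K.erase c} : Set (Finset V)) := by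
      rw [← hset]; exact Or.inr (Or.inl rfl)
    have hZmem : Z ∈ ({K.erase a, K.erase b, K.erase c} : Set (Finset V)) := by
      rw [← hset]; exact Or.inr (Or.inr rfl)
    rcases hYmem with hY | hY | hY
    · have hx : a ∈ X := key a ha X hXmem (by rw [← hY]; exact hXY)
      have hz : a ∈ Z := key a ha Z hZmem (by rw [← hY]; exact fun e => hYZ e.symm)
      have : a ∈ Y := hsub (Finset.mem_inter.2 ⟨hx, hz⟩)
      rw [hY] at this
      exact (Finset.mem_erase.1 this).1 rfl
    · have hx : b ∈ X := key b hb X hXmem (by rw [← hY]; exact hXY)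
      have hz : b ∈ Z := key b hb Z hZmem (by rw [← hY]; exact fun e => hYZ e.symm)
      have : b ∈ Y := hsub (Finset.mem_inter.2 ⟨hx, hz⟩)
      rw [hY] at this
      exact (Finset.mem_erase.1 this).1 rfl
    · have hx : c ∈ X := key c hc X hXmem (by rw [← hY]; exact hXY)
      have hz : c ∈ Z := key c hc Z hZmem (by rw [← hY]; exact fun e => hYZ e.symm)
      have : c ∈ Y := hsub (Finset.mem_inter.2 ⟨hx, hz⟩)
      rw [hY] at this
      exact (Finset.mem_erase.1 this).1 rfl
  refine ⟨?_, part2⟩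
  rintro ⟨T, hrange⟩
  -- pick preimages of the three clusters
  have hi : ∃ i, T.C i = K.erase a := by
    have : K.erase a ∈ Set.range T.C := by rw [hrange]; exact Or.inl rfl
    exact this
  have hj : ∃ j, T.C j = K.erase b := by
    have : K.erase b ∈ Set.range T.C := by rw [hrange]; exact Or.inr (Or.inl rfl)
    exact this
  have hk : ∃ k, T.C k = K.erase c := by
    have : K.erase c ∈ Set.range T.C := by rw [hrange]; exact Or.inr (Or.inr rfl)
    exact this
  obtain ⟨i, hCi⟩ := hi
  obtain ⟨j, hCj⟩ := hj
  obtain ⟨k, hCk⟩ := hk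
  have hij : i ≠ j := fun e => hne a b ha hb hab (by rw [← hCi, ← hCj, e])
  have hik : i ≠ k := fun e => hne a c ha hc hac (by rw [← hCi, ← hCk, e])
  have hjk : j ≠ k := fun e => hne b c hb hc hbc (by rw [← hCj, ← hCk, e])
  -- every node is i, j or k
  have hall : ∀ m : T.ι, m = i ∨ m = j ∨ m = k := by
    intro m
    have hm : T.C m ∈ ({K.erase a, K.erase b, K.erase c} : Set (Finset V)) := by
      rw [← hrange]; exact ⟨m, rfl⟩
    have eq_of : ∀ n : T.ι, T.C m = T.C n → m = n := by
      intro n hmn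
      by_contra hne'
      exact T.noSub m n hne' (hmn ▸ Finset.Subset.refl _)
    rcases hm with h | h | h
    · exact Or.inl (eq_of i (by rw [h, hCi]))
    · exact Or.inr (Or.inl (eq_of j (by rw [h, hCj])))
    · exact Or.inr (Or.inr (eq_of k (by rw [h, hCk])))
  -- auxiliary: the fixed set {A,B,C} rewritten in other orders
  have comm1 : ({K.erase a, K.erase c, K.erase b} : Set (Finset V))
      = {K.erase a, K.erase b, K.erase c} := by
    ext x; simp only [Set.mem_insert_iff, Set.mem_singleton_iff]; tauto
  have comm2 : ({K.erase b, K.erase a, K.erase c} : Set (Finset V))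
      = {K.erase a, K.erase b, K.erase c} := by
    ext x; simp only [Set.mem_insert_iff, Set.mem_singleton_iff]; tauto
  -- get the three "path or adjacency" alternatives
  have hconn := T.isTree.isConnected
  -- path i -> k
  obtain ⟨p_ik, hp_ik⟩ := (T.isTree.existsUnique_path i k).exists
  obtain ⟨p_ij, hp_ij⟩ := (T.isTree.existsUnique_path i j).exists
  obtain ⟨p_jk, hp_jk⟩ := (T.isTree.existsUnique_path j k).exists
  have alt1 := path_mid_or_adj T.G hik hall p_ik
  have alt2 := path_mid_or_adj T.G (j := k) hij (fun m => by rcases hall m with h|h|h <;> tauto) p_ij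
  have alt3 := path_mid_or_adj T.G (j := i) hjk (fun m => by rcases hall m with h|h|h <;> tauto) p_jk
  rcases alt1 with hmid | hadj_ik
  · have := T.rip i k p_ik hp_ik j hmid
    rw [hCi, hCj, hCk] at this
    exact part2 (K.erase a) (K.erase b) (K.erase c) rfl
      (hne a b ha hb hab) (hne b c hb hc hbc) (hne a c ha hc hac) this
  rcases alt2 with hmid | hadj_ij
  · have := T.rip i j p_ij hp_ij k hmid
    rw [hCi, hCj, hCk] at this
    exact part2 (K.erase a) (K.erase c) (K.erase b) comm1
      (hne a c ha hc hac) (fun e => hne b c hb hc hbc e.symm) (hne a b ha hb hab) this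
  rcases alt3 with hmid | hadj_jk
  · have := T.rip j k p_jk hp_jk i hmid
    rw [hCi, hCj, hCk] at this
    exact part2 (K.erase b) (K.erase a) (K.erase c) comm2
      (fun e => hne a b ha hb hab e.symm) (hne a c ha hc hac) (hne b c hb hc hbc) this
  -- all three adjacent: triangle, contradicts uniqueness of paths in a tree
  have huniq := SimpleGraph.isAcyclic_iff_path_unique.1 T.isTree.IsAcyclic
  have hpath1 : (SimpleGraph.Walk.cons hadj_ik SimpleGraph.Walk.nil : T.G.Walk i k).IsPath := by
    simp [SimpleGraph.Walk.isPath_def, hik]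
  have hpath2 : (SimpleGraph.Walk.cons hadj_ij
      (SimpleGraph.Walk.cons hadj_jk SimpleGraph.Walk.nil) : T.G.Walk i k).IsPath := by
    simp [SimpleGraph.Walk.isPath_def, hij, hik, hjk]
  have := huniq ⟨_, hpath1⟩ ⟨_, hpath2⟩
  have hwalk : (SimpleGraph.Walk.cons hadj_ik SimpleGraph.Walk.nil : T.G.Walk i k)
      = SimpleGraph.Walk.cons hadj_ij (SimpleGraph.Walk.cons hadj_jk SimpleGraph.Walk.nil) :=
    congrArg Subtype.val this
  have hlen := congrArg SimpleGraph.Walk.length hwalk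
  simp [SimpleGraph.Walk.length_cons] at hlen
end

section
/- Let V = {1, 2, 3, 4, 5, 6, 7} and let T be the tree with four nodes labeled by the clusters K1 = {1,2,3,5}, K2 = {1,2,3,4}, K3 = {1,3,4,6}, K4 = {1,2,4,7}, in which K2 is adjacent to each of K1, K3, K4 (so the separators are {1,2,3}, {1,3,4}, {1,2,4}). Then T is a 4-order cherry tree on V, but T is not a truncated R-vine at level 4: there is no cherry-vine sequence T_2, T_3, T_4 on V with T_4 = T. In particular, not every cherry tree is the top tree of a truncated R-vine. -/
/- The vertex set `V = {1,…,7}` is modeled as `Fin 7` via `i ↦ i - 1`;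
thus `K1 = {1,2,3,5}`, `K2 = {1,2,3,4}`, `K3 = {1,3,4,6}`, `K4 = {1,2,4,7}`
become the following finsets. -/
def K1 : Finset (Fin 7) := {0, 1, 2, 4}
def K2 : Finset (Fin 7) := {0, 1, 2, 3}
def K3 : Finset (Fin 7) := {0, 2, 3, 5}
def K4 : Finset (Fin 7) := {0, 1, 3, 6}

/-
Suppose `T₂, T₃, T₄` were a cherry-vine sequence with `T₄ = T`. The cluster `K2` is the union
of the clusters of two adjacent nodes `a, b` of `T₃`, and every other cluster `K` of `T` is the
union over another edge of `T₃`. In the tree `T₃` one end `g` of the edge `ab` lies on every path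
from that other edge to `ab`, so by the running intersection property `K ∩ K2 ⊆ C g`; both sides
have three elements, hence `K ∩ K2 = C g`. Thus the three-element separators at `K2` take at most
two values, whereas the star has three distinct ones: `{1,2,3}`, `{1,3,4}`, `{1,2,4}`.
-/

namespace SimpleGraph

variable {ι : Type*} {G : SimpleGraph ι}

lemma Walk.reachable_deleteEdges_of_notMem_support {u w x : ι} {e : Sym2 ι} (p : G.Walk u w)
    (hx : x ∉ p.support) (hxe : x ∈ e) : (G.deleteEdges {e}).Reachable u w := by
  obtain ⟨y, rfl⟩ := hxe
  exact reachable_deleteEdges_iff_exists_walk.mpr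
    ⟨p, fun h => hx (p.fst_mem_support_of_mem_edges h)⟩

/-- Deleting the bridge `e₂` splits the graph in two; `e₁` lies on one side, and the endpoint
`g` of `e₂` on that side lies on every walk from `e₁` to `e₂`. -/
lemma IsAcyclic.exists_gate (hG : G.IsAcyclic) {e₁ e₂ : Sym2 ι} (he₁ : e₁ ∈ G.edgeSet)
    (he₂ : e₂ ∈ G.edgeSet) (hne : e₁ ≠ e₂) :
    ∃ g ∈ e₂, ∀ u ∈ e₁, ∀ w ∈ e₂, ∀ p : G.Walk u w, g ∈ p.support := by
  induction e₁ using Sym2.ind with | _ u₀ v₀ => ?_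
  induction e₂ using Sym2.ind with | _ a b => ?_
  set H := G.deleteEdges {s(a, b)}
  have hbridge : ¬ H.Reachable a b := isBridge_iff.mp (isAcyclic_iff_forall_adj_isBridge.mp hG he₂)
  have huv : H.Reachable u₀ v₀ := (deleteEdges_adj.mpr ⟨he₁, hne⟩).reachable
  by_cases ha : H.Reachable u₀ a
  · refine ⟨a, Sym2.mem_mk_left a b, fun u hu w hw p => ?_⟩
    have hua : H.Reachable u a := by
      rcases Sym2.mem_iff.mp hu with rfl | rfl
      exacts [ha, huv.symm.trans ha]
    rcases Sym2.mem_iff.mp hw with h | h <;> subst w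
    · exact p.end_mem_support
    · by_contra hp
      exact hbridge (hua.symm.trans
        (p.reachable_deleteEdges_of_notMem_support hp (Sym2.mem_mk_left a b)))
  · refine ⟨b, Sym2.mem_mk_right a b, fun u hu w hw p => ?_⟩
    have hua : ¬ H.Reachable u a := by
      rcases Sym2.mem_iff.mp hu with rfl | rfl
      exacts [ha, fun h => ha (huv.trans h)]
    rcases Sym2.mem_iff.mp hw with h | h <;> subst w
    · by_contra hp
      exact hua (p.reachable_deleteEdges_of_notMem_support hp (Sym2.mem_mk_right a b))
    · exact p.end_mem_support

/-- A vertex other than the centre has the centre as its only neighbour, so it cannot be an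
inner vertex of a path. -/
lemma Walk.IsPath.eq_center_of_mem_support [DecidableEq ι] {c u w x : ι}
    {p : (starGraph c).Walk u w} (hp : p.IsPath) (hx : x ∈ p.support) (hxu : x ≠ u)
    (hxw : x ≠ w) : x = c := by
  obtain ⟨n, rfl, hn⟩ := Walk.mem_support_iff_exists_getVert.mp hx
  by_contra hxc
  have hn₀ : n ≠ 0 := by rintro rfl; exact hxu p.getVert_zero
  have hnl : n < p.length := lt_of_le_of_ne hn (by rintro rfl; exact hxw p.getVert_length)
  have hprev := p.adj_getVert_succ (i := n - 1) (by omega)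
  have hnext := p.adj_getVert_succ hnl
  rw [Nat.sub_add_cancel (Nat.one_le_iff_ne_zero.mpr hn₀)] at hprev
  have hprev_c := (starGraph_adj.mp hprev).2.resolve_right hxc
  have hnext_c := (starGraph_adj.mp hnext).2.resolve_left hxc
  have := hp.getVert_injOn (by simp only [Set.mem_ofPred_eq]; omega)
    (by simp only [Set.mem_ofPred_eq]; omega) (hprev_c.trans hnext_c.symm)
  omega

end SimpleGraph

open SimpleGraph

namespace JTree

variable {V : Type} [DecidableEq V]

def star {ι : Type} [Fintype ι] [DecidableEq ι] (c : ι) (C : ι → Finset V)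
    (hsub : ∀ i j, i ≠ j → ¬ C i ⊆ C j) (hc : ∀ i j, i ≠ j → C i ∩ C j ⊆ C c) : JTree V where
  ι := ι
  G := starGraph c
  isTree := isTree_starGraph c
  C := C
  noSub := hsub
  rip i j p hp x hx := by
    by_cases hxi : x = i
    · exact hxi ▸ Finset.inter_subset_left
    by_cases hxj : x = j
    · exact hxj ▸ Finset.inter_subset_right
    have hij : i ≠ j := by
      rintro rfl
      simp [Walk.eq_nil_iff_nil.mpr (Walk.isPath_iff_nil.mp hp), hxi] at hx
    exact hp.eq_center_of_mem_support hx hxi hxj ▸ hc i j hij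

lemma exists_union_inter_union_subset_s9 (T : JTree V) {a₁ b₁ a₂ b₂ : T.ι} (h₁ : T.G.Adj a₁ b₁)
    (h₂ : T.G.Adj a₂ b₂) (hne : T.C a₁ ∪ T.C b₁ ≠ T.C a₂ ∪ T.C b₂) :
    ∃ g ∈ s(a₂, b₂), (T.C a₁ ∪ T.C b₁) ∩ (T.C a₂ ∪ T.C b₂) ⊆ T.C g := by
  have hedge : s(a₁, b₁) ≠ s(a₂, b₂) := by
    rintro h
    rcases Sym2.eq_iff.mp h with ⟨rfl, rfl⟩ | ⟨rfl, rfl⟩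
    exacts [hne rfl, hne (Finset.union_comm _ _)]
  obtain ⟨g, hg, hgate⟩ := T.isTree.isAcyclic.exists_gate h₁ h₂ hedge
  refine ⟨g, hg, fun x hx => ?_⟩
  obtain ⟨hx₁, hx₂⟩ := Finset.mem_inter.mp hx
  obtain ⟨u, hu, hxu⟩ : ∃ u ∈ s(a₁, b₁), x ∈ T.C u := by
    rcases Finset.mem_union.mp hx₁ with h | h
    exacts [⟨a₁, Sym2.mem_mk_left _ _, h⟩, ⟨b₁, Sym2.mem_mk_right _ _, h⟩]
  obtain ⟨w, hw, hxw⟩ : ∃ w ∈ s(a₂, b₂), x ∈ T.C w := by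
    rcases Finset.mem_union.mp hx₂ with h | h
    exacts [⟨a₂, Sym2.mem_mk_left _ _, h⟩, ⟨b₂, Sym2.mem_mk_right _ _, h⟩]
  obtain ⟨p, hp⟩ := T.isTree.connected.exists_isPath u w
  exact T.rip u w p hp g (hgate u hu w hw p) (Finset.mem_inter.mpr ⟨hxu, hxw⟩)

/-- `A` and `B` are the clusters at the ends of the edge of `T` whose union is `T'.C j`. -/
lemma Succ.exists_pair_inter_eq {T T' : JTree V} (hs : T.Succ T') {m : ℕ}
    (hcard : ∀ i, (T.C i).card = m) (j : T'.ι) :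
    ∃ A B : Finset V, ∀ i, T'.C i ≠ T'.C j → m ≤ (T'.C i ∩ T'.C j).card →
      T'.C i ∩ T'.C j = A ∨ T'.C i ∩ T'.C j = B := by
  obtain ⟨a, b, hab, hj⟩ := hs j
  refine ⟨T.C a, T.C b, fun i hne hle => ?_⟩
  obtain ⟨a', b', hab', hi⟩ := hs i
  rw [hi, hj] at hne hle ⊢
  obtain ⟨g, hg, hsub⟩ := T.exists_union_inter_union_subset_s9 hab' hab hne
  have hgeq := Finset.eq_of_subset_of_card_le hsub (hcard g ▸ hle)
  rcases Sym2.mem_iff.mp hg with rfl | rfl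
  exacts [Or.inl hgeq, Or.inr hgeq]

lemma IsTruncatedRVine.exists_pair_inter_eq {T : JTree V} {k : ℕ} (hT : T.IsTruncatedRVine k)
    (hk : 3 ≤ k) (j : T.ι) :
    ∃ A B : Finset V, ∀ i, T.C i ≠ T.C j → k - 1 ≤ (T.C i ∩ T.C j).card →
      T.C i ∩ T.C j = A ∨ T.C i ∩ T.C j = B := by
  obtain ⟨Ts, hcherry, hsucc, rfl⟩ := hT
  have hs := hsucc (k - 1) (by omega) (by omega)
  rw [Nat.sub_add_cancel (by omega)] at hs
  exact hs.exists_pair_inter_eq (hcherry (k - 1) (by omega) (by omega)).2.1 j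

end JTree

def starTree : JTree (Fin 7) :=
  JTree.star (1 : Fin 4) ![K1, K2, K3, K4] (by decide) (by decide)

lemma starTree_coversAll : starTree.CoversAll :=
  show ∀ v : Fin 7, ∃ i : Fin 4, v ∈ ![K1, K2, K3, K4] i by decide

lemma starTree_isCherry : starTree.IsCherry 4 :=
  ⟨show ∀ i : Fin 4, (![K1, K2, K3, K4] i).card = 4 by decide,
    show ∀ i j : Fin 4, (starGraph 1).Adj i j →
      (![K1, K2, K3, K4] i ∩ ![K1, K2, K3, K4] j).card = 3 by decide⟩

/-- the tree with four nodes labeled `K1, K2, K3, K4`, with `K2`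
adjacent to each of `K1, K3, K4`, is a 4-order cherry tree on `V = {1,…,7}` but is
not a truncated R-vine at level 4; in particular not every cherry tree is the top
tree of a truncated R-vine. -/
theorem star_cherry_tree_not_truncated_rvine :
    ∃ T : JTree (Fin 7), ∃ e : Fin 4 ≃ T.ι,
      T.C (e 0) = K1 ∧ T.C (e 1) = K2 ∧ T.C (e 2) = K3 ∧ T.C (e 3) = K4 ∧
      (∀ i j : Fin 4, T.G.Adj (e i) (e j) ↔ i ≠ j ∧ (i = 1 ∨ j = 1)) ∧
      T.CoversAll ∧ T.IsCherry 4 ∧ ¬ T.IsTruncatedRVine 4 := by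
  refine ⟨starTree, Equiv.refl _, rfl, rfl, rfl, rfl, fun i j => starGraph_adj,
    starTree_coversAll, starTree_isCherry, fun hT => ?_⟩
  obtain ⟨A, B, hAB⟩ := hT.exists_pair_inter_eq (by norm_num) (1 : Fin 4)
  have h₁ : K1 ∩ K2 = A ∨ K1 ∩ K2 = B := hAB (0 : Fin 4) (by decide) (by decide)
  have h₃ : K3 ∩ K2 = A ∨ K3 ∩ K2 = B := hAB (2 : Fin 4) (by decide) (by decide)
  have h₄ : K4 ∩ K2 = A ∨ K4 ∩ K2 = B := hAB (3 : Fin 4) (by decide) (by decide)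
  have hdistinct : K1 ∩ K2 ≠ K3 ∩ K2 ∧ K1 ∩ K2 ≠ K4 ∩ K2 ∧ K3 ∩ K2 ≠ K4 ∩ K2 := by decide
  grind
end

section
/- Let V be a finite set and let f : ℝ^V → ℝ be a measurable, nonnegative probability density function (its integral over ℝ^V equals 1). For A ⊆ V let f_A denote the marginal density of f on the coordinates in A (the integral of f over the remaining coordinates), and for v ∈ V let F_v(t) = ∫_{−∞}^t f_{{v}}(s) ds. Assume each one-dimensional marginal density f_{{v}} is everywhere positive and each F_v is a strictly increasing continuous bijection from ℝ onto (0,1). Suppose f factorizes according to a junction tree T on V, i.e., for all x ∈ ℝ^V: f(x) · ∏_{edges {i,j} of T} f_{C_i ∩ C_j}(x restricted to C_i ∩ C_j) = ∏_{nodes i of T} f_{C_i}(x restricted to C_i). For A ⊆ V define the copula density c_A : (0,1)^A → ℝ by c_A(u) = f_A((F_v^{−1}(u_v))_{v ∈ A}) / ∏_{v ∈ A} f_{{v}}(F_v^{−1}(u_v)). Then for all u ∈ (0,1)^V: c_V(u) · ∏_{edges {i,j} of T} c_{C_i ∩ C_j}(u restricted to C_i ∩ C_j) = ∏_{nodes i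 of T} c_{C_i}(u restricted to C_i). (The copula density associated to a junction tree density factorizes according to the same junction tree.) -/
open MeasureTheory

/-- The marginal density of `f` on the coordinates in `A`, obtained by integrating
`f` over the coordinates outside `A` (as a function of the full vector `x`, it
depends only on the coordinates of `x` in `A`). -/
noncomputable def margDens {V : Type} [Fintype V] [DecidableEq V]
    (f : (V → ℝ) → ℝ) (A : Finset V) (x : V → ℝ) : ℝ :=
  ∫ y : ({v : V // v ∉ A} → ℝ),
    f (fun v => if h : v ∈ A then x v else y ⟨v, h⟩)

/-- The one-dimensional marginal density `f_{{v}}` as a function on `ℝ`. -/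
noncomputable def dens1 {V : Type} [Fintype V] [DecidableEq V]
    (f : (V → ℝ) → ℝ) (v : V) (s : ℝ) : ℝ :=
  margDens f {v} (fun _ => s)

/-- The cumulative distribution function `F_v(t) = ∫_{-∞}^{t} f_{{v}}(s) ds`. -/
noncomputable def cdf1 {V : Type} [Fintype V] [DecidableEq V]
    (f : (V → ℝ) → ℝ) (v : V) (t : ℝ) : ℝ :=
  ∫ s in Set.Iic t, dens1 f v s

/-- The inverse `F_v⁻¹` of the cumulative distribution function. -/
noncomputable def qf1 {V : Type} [Fintype V] [DecidableEq V]
    (f : (V → ℝ) → ℝ) (v : V) (u : ℝ) : ℝ :=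
  Function.invFun (cdf1 f v) u

/-- The copula density of the marginal of `f` on `A`:
`c_A(u) = f_A((F_v⁻¹(u_v))_{v ∈ A}) / ∏_{v ∈ A} f_{{v}}(F_v⁻¹(u_v))`. -/
noncomputable def copDens {V : Type} [Fintype V] [DecidableEq V]
    (f : (V → ℝ) → ℝ) (A : Finset V) (u : V → ℝ) : ℝ :=
  margDens f A (fun v => qf1 f v (u v)) / ∏ v ∈ A, dens1 f v (qf1 f v (u v))


/-!
A copula density is the joint density evaluated at the quantile point `x = (F_v⁻¹(u_v))_v`,
divided by the product of the one-dimensional marginals `d_v = f_{v}(x_v)` over its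
coordinates. Dividing the factorization of `f` at `x` therefore gives the claimed one, provided
every `d_v` occurs equally often in the two denominators. On the left `d_v` occurs once in
`c_V` and once for each edge whose separator contains `v`; on the right once for each cluster
containing `v`. By the running intersection property the clusters containing `v` induce a
subtree of `T`, whose edges are exactly the edges with `v` in their separator, and a tree
has one edge fewer than nodes.
-/

open Finset

theorem Finset.prod_prod_eq_prod_pow_card {ι α M : Type*} [Fintype α] [DecidableEq α]
    [CommMonoid M] (s : Finset ι) (t : ι → Finset α) (g : α → M) :
    ∏ i ∈ s, ∏ a ∈ t i, g a = ∏ a, g a ^ #{i ∈ s | a ∈ t i} := by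
  rw [prod_comm' (t' := univ) (s' := fun a => {i ∈ s | a ∈ t i}) (by simp [and_comm])]
  simp only [prod_const]

namespace JTree

variable {V : Type} [DecidableEq V] (T : JTree V)

theorem connected_induce_mem_cluster {v : V} (hv : ∃ i, v ∈ T.C i) :
    (T.G.induce {i | v ∈ T.C i}).Connected := by
  obtain ⟨i₀, hi₀⟩ := hv
  refine SimpleGraph.induce_connected_of_patches i₀ hi₀ fun {j} hj => ?_
  obtain ⟨p⟩ := T.isTree.connected.preconnected i₀ j
  have hsupp : {k | k ∈ p.bypass.support} ⊆ {i | v ∈ T.C i} := fun k hk =>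
    T.rip i₀ j p.bypass p.bypass_isPath k hk (mem_inter.mpr ⟨hi₀, hj⟩)
  exact ⟨_, hsupp, p.bypass.start_mem_support, p.bypass.end_mem_support,
    p.bypass.connected_induce_support.preconnected _ _⟩

open Classical in
theorem card_edgeFinset_induce_mem_cluster (v : V) :
    #(T.G.induce {i | v ∈ T.C i}).edgeFinset = #{e ∈ T.edgeFinset | v ∈ T.sep e} := by
  rw [← card_map, SimpleGraph.map_edgeFinset_induce]
  congr 1
  ext e
  induction e with
  | _ a b => simp [JTree.edgeFinset, JTree.sep]

theorem card_filter_mem_sep_add_one {v : V} (hv : ∃ i, v ∈ T.C i) :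
    #{e ∈ T.edgeFinset | v ∈ T.sep e} + 1 = #{i | v ∈ T.C i} := by
  classical
  have htree : (T.G.induce {i | v ∈ T.C i}).IsTree :=
    ⟨T.connected_induce_mem_cluster hv, T.isTree.isAcyclic.induce _⟩
  rw [← T.card_edgeFinset_induce_mem_cluster, htree.card_edgeFinset, Fintype.card_subtype]
  rfl

theorem prod_mul_prod_sep_eq_prod_cluster [Fintype V] {M : Type*} [CommMonoid M]
    (hcov : T.CoversAll) (g : V → M) :
    (∏ w, g w) * ∏ e ∈ T.edgeFinset, ∏ w ∈ T.sep e, g w = ∏ i, ∏ w ∈ T.C i, g w := by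
  rw [prod_prod_eq_prod_pow_card, prod_prod_eq_prod_pow_card, ← prod_mul_distrib]
  refine prod_congr rfl fun w _ => ?_
  rw [← pow_succ', T.card_filter_mem_sep_add_one (hcov w)]

theorem div_mul_prod_sep_div_eq_prod_cluster_div [Fintype V] {K : Type*} [Field K]
    (hcov : T.CoversAll) (N : Finset V → K) (g : V → K)
    (hN : N univ * ∏ e ∈ T.edgeFinset, N (T.sep e) = ∏ i, N (T.C i)) :
    N univ / (∏ w, g w) * ∏ e ∈ T.edgeFinset, N (T.sep e) / ∏ w ∈ T.sep e, g w
      = ∏ i, N (T.C i) / ∏ w ∈ T.C i, g w := by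
  rw [prod_div_distrib, prod_div_distrib, div_mul_div_comm, hN,
    T.prod_mul_prod_sep_eq_prod_cluster hcov]

end JTree

theorem margDens_univ {V : Type} [Fintype V] [DecidableEq V] (f : (V → ℝ) → ℝ) (x : V → ℝ) :
    margDens f univ x = f x := by
  have : IsEmpty {v : V // v ∉ (univ : Finset V)} := ⟨fun ⟨v, hv⟩ => hv (mem_univ v)⟩
  simp [margDens, measureReal_def, volume_pi]

theorem junction_tree_copula_factorization_general
    {V : Type} [Fintype V] [DecidableEq V]
    (f : (V → ℝ) → ℝ)
    (T : JTree V) (hcov : T.CoversAll)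
    (hfac : ∀ x : V → ℝ,
      f x * ∏ e ∈ T.edgeFinset, margDens f (T.sep e) x = ∏ i : T.ι, margDens f (T.C i) x) :
    ∀ u : V → ℝ, (∀ v, u v ∈ Set.Ioo (0 : ℝ) 1) →
      copDens f Finset.univ u * ∏ e ∈ T.edgeFinset, copDens f (T.sep e) u
        = ∏ i : T.ι, copDens f (T.C i) u := by
  intro u _
  set x : V → ℝ := fun v => qf1 f v (u v)
  have hfac_x : margDens f univ x * ∏ e ∈ T.edgeFinset, margDens f (T.sep e) x
      = ∏ i, margDens f (T.C i) x := by
    rw [margDens_univ]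
    exact hfac x
  exact T.div_mul_prod_sep_div_eq_prod_cluster_div hcov (fun A => margDens f A x)
    (fun v => dens1 f v (x v)) hfac_x

/-- if a probability density `f` on `ℝ^V` (with everywhere positive
one-dimensional marginal densities whose cdfs are strictly increasing continuous
bijections onto `(0,1)`) factorizes according to a junction tree `T` on `V`, then
the associated copula density factorizes according to the same junction tree:
for all `u ∈ (0,1)^V`,
`c_V(u) ⬝ ∏_{edges {i,j}} c_{C i ∩ C j}(u) = ∏_{nodes i} c_{C i}(u)`. -/
theorem junction_tree_copula_factorization
    {V : Type} [Fintype V] [DecidableEq V]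
    (f : (V → ℝ) → ℝ) (hmeas : Measurable f) (hnn : ∀ x, 0 ≤ f x)
    (hint : ∫ x : V → ℝ, f x = 1)
    (hpos : ∀ v s, 0 < dens1 f v s)
    (hmono : ∀ v, StrictMono (cdf1 f v))
    (hcont : ∀ v, Continuous (cdf1 f v))
    (hrange : ∀ v, Set.range (cdf1 f v) = Set.Ioo (0 : ℝ) 1)
    (T : JTree V) (hcov : T.CoversAll)
    (hfac : ∀ x : V → ℝ,
      f x * ∏ e ∈ T.edgeFinset, margDens f (T.sep e) x = ∏ i : T.ι, margDens f (T.C i) x) :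
    ∀ u : V → ℝ, (∀ v, u v ∈ Set.Ioo (0 : ℝ) 1) →
      copDens f Finset.univ u * ∏ e ∈ T.edgeFinset, copDens f (T.sep e) u
        = ∏ i : T.ι, copDens f (T.C i) u :=
  junction_tree_copula_factorization_general f T hcov hfac
end
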